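/- arXiv:2110.01040 — 9 statements merged into one kernel-verified Lean document; each statement's English description precedes it below -/
import Mathlib

section
/- Let n ≥ 3 and let A be an n × n stochastic matrix of the form A = D + (I_n - D)C_n, where D is a diagonal matrix with diagonal entries α₁, ..., α_n ∈ [0,1] and C_n is the cyclic permutation matrix. If the characteristic polynomial of A equals (t - β)^n - α^n with α ∈ (0,1) and β = 1 - α, then D = βI_n, i.e., αᵢ = β for all i. -/
/-!
Expanding the determinant of `tI - A` along permutations, only the identity and the `n`-cycle
contribute, so the characteristic polynomial of `D + (I - D)C` is `∏ (t - αᵢ) - ∏ (1 - αᵢ)`.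
The hypothesis then says that the `rᵢ = αᵢ - β` are the roots of `tⁿ + c` for a constant `c`.
Since `∏ (t - rᵢ) (t + rᵢ) = ∏ (t² - rᵢ²)`, the sum `∑ rᵢ²` is, up to sign, the coefficient of
`t²ⁿ⁻²` in `(tⁿ + c)(tⁿ ± c)`, which vanishes for `n ≥ 3`; over `ℝ` this forces every `rᵢ = 0`.
-/

open Polynomial Matrix

/-- The `n × n` cyclic permutation matrix with 1s in positions `(i, i+1 mod n)`. -/
def Cmat (n : ℕ) : Matrix (Fin n) (Fin n) ℝ :=
  fun i j => if (j : ℕ) = ((i : ℕ) + 1) % n then 1 else 0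

lemma finRotate_apply_ne_self {n : ℕ} (hn : 2 ≤ n) (i : Fin n) : finRotate n i ≠ i :=
  Equiv.Perm.mem_support.mp (support_finRotate_of_le hn ▸ Finset.mem_univ i)

lemma Cmat_eq_permMatrix_finRotate (n : ℕ) : Cmat n = (finRotate n).permMatrix ℝ := by
  ext i j
  have := i.neZero
  simp [Cmat, PEquiv.toMatrix_apply, finRotate_apply, Fin.ext_iff, Fin.val_add, eq_comm]

namespace Equiv.Perm

variable {ι : Type*} [DecidableEq ι] [Fintype ι]

lemma eq_one_or_eq_of_forall_apply_eq_or_eq {π σ : Perm ι} (hπ : π.IsCycle)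
    (hπ_fix : ∀ i, π i ≠ i) (hσ : ∀ i, σ i = i ∨ σ i = π i) : σ = 1 ∨ σ = π := by
  by_cases hσ1 : σ = 1
  · exact Or.inl hσ1
  right
  obtain ⟨i₀, hi₀⟩ : ∃ i, σ i ≠ i := by
    by_contra! h
    exact hσ1 (Equiv.ext h)
  have hσπ : ∀ k : ℕ, σ ((π ^ k) i₀) = π ((π ^ k) i₀) := by
    intro k
    induction k with
    | zero => exact (hσ i₀).resolve_left hi₀
    | succ k ih =>
      rw [pow_succ', Perm.mul_apply]
      refine (hσ _).resolve_left fun h => hπ_fix ((π ^ k) i₀) (σ.injective ?_)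
      rw [h, ih]
  ext j
  obtain ⟨k, rfl⟩ := hπ.exists_pow_eq (hπ_fix i₀) (hπ_fix j)
  exact hσπ k

end Equiv.Perm

namespace Matrix

variable {ι R : Type*} [DecidableEq ι] [Fintype ι] [CommRing R]

theorem det_eq_prod_diag_add_sign_mul_prod_of_cycle {π : Equiv.Perm ι} (hπ : π.IsCycle)
    (hπ_fix : ∀ i, π i ≠ i) (M : Matrix ι ι R) (hM : ∀ i j, j ≠ i → j ≠ π i → M i j = 0) :
    M.det = ∏ i, M i i + Equiv.Perm.sign π * ∏ i, M i (π i) := by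
  rw [← det_transpose, det_apply', Fintype.sum_eq_add 1 π hπ.ne_one.symm]
  · simp
  rintro σ ⟨hσ1, hσπ⟩
  obtain ⟨i, hi⟩ : ∃ i, σ i ≠ i ∧ σ i ≠ π i := by
    by_contra! h
    exact (Equiv.Perm.eq_one_or_eq_of_forall_apply_eq_or_eq hπ hπ_fix
      fun i => or_iff_not_imp_left.2 (h i)).elim hσ1 hσπ
  rw [Finset.prod_eq_zero (Finset.mem_univ i)
    (by rw [transpose_apply]; exact hM _ _ hi.1 hi.2), mul_zero]

theorem charpoly_diagonal_add_diagonal_mul_permMatrix {π : Equiv.Perm ι} (hπ : π.IsCycle)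
    (hπ_fix : ∀ i, π i ≠ i) (d e : ι → R) :
    (diagonal d + diagonal e * π.permMatrix R).charpoly =
      ∏ i, (X - C (d i)) - C (∏ i, e i) := by
  have hsupp : π.support = Finset.univ := by
    ext i; simpa using hπ_fix i
  have hentry : ∀ i j, (diagonal d + diagonal e * π.permMatrix R) i j =
      (if i = j then d i else 0) + (if π i = j then e i else 0) := by
    intro i j
    simp [diagonal_apply, PEquiv.toMatrix_apply]
  rw [charpoly, det_eq_prod_diag_add_sign_mul_prod_of_cycle hπ hπ_fix]
  · have hdiag : ∀ i, charmatrix (diagonal d + diagonal e * π.permMatrix R) i i = X - C (d i) := by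
      intro i
      simp [hentry, hπ_fix i]
    have hcyc : ∀ i, charmatrix (diagonal d + diagonal e * π.permMatrix R) i (π i) = -C (e i) := by
      intro i
      simp [hentry, (hπ_fix i).symm]
    simp only [hdiag, hcyc, Finset.prod_neg, ← map_prod, hπ.sign, hsupp, Finset.card_univ]
    have hsq : ((-1 : R[X]) ^ Fintype.card ι) ^ 2 = 1 := by
      rw [← pow_mul, mul_comm, pow_mul, neg_one_sq, one_pow]
    push_cast
    linear_combination -C (∏ i, e i) * hsq
  · intro i j hji hjπ
    simp [hentry, Ne.symm hji, Ne.symm hjπ]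

end Matrix

namespace Polynomial

variable {R ι : Type*} [Fintype ι]

section CommRing

variable [CommRing R]

theorem prod_X_add_C_eq_of_prod_X_sub_C_eq {r : ι → R} {c : R}
    (h : ∏ i, (X - C (r i)) = X ^ Fintype.card ι + C c) :
    ∏ i, (X + C (r i)) = X ^ Fintype.card ι + C ((-1) ^ Fintype.card ι * c) := by
  have hcomp := congrArg (fun p : R[X] => (-1) ^ Fintype.card ι * p.comp (-X)) h
  simp only [prod_comp, sub_comp, X_comp, C_comp, add_comp, pow_comp] at hcomp
  have hsq : ((-1 : R[X]) ^ Fintype.card ι) ^ 2 = 1 := by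
    rw [← pow_mul, mul_comm, pow_mul, neg_one_sq, one_pow]
  rw [show ∏ i, (-X - C (r i)) = (-1) ^ Fintype.card ι * ∏ i, (X + C (r i)) by
    rw [← Finset.card_univ, ← Finset.prod_neg]
    exact Finset.prod_congr rfl fun i _ => by ring] at hcomp
  rw [neg_pow] at hcomp
  simp only [map_mul, map_pow, map_neg, map_one]
  linear_combination hcomp - (∏ i, (X + C (r i)) - X ^ Fintype.card ι) * hsq

theorem expand_prod_X_sub_C_sq (r : ι → R) :
    expand R 2 (∏ i, (X - C (r i ^ 2))) = (∏ i, (X - C (r i))) * ∏ i, (X + C (r i)) := by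
  rw [map_prod, ← Finset.prod_mul_distrib]
  refine Finset.prod_congr rfl fun i _ => ?_
  rw [map_sub, expand_X, expand_C, map_pow]
  ring

theorem sum_sq_eq_zero_of_prod_X_sub_C_eq {r : ι → R} {c : R} (hι : 3 ≤ Fintype.card ι)
    (h : ∏ i, (X - C (r i)) = X ^ Fintype.card ι + C c) :
    ∑ i, r i ^ 2 = 0 := by
  set n := Fintype.card ι
  have hcoeff := congrArg (coeff · (2 * (n - 1))) (expand_prod_X_sub_C_sq r)
  rw [coeff_expand two_pos, if_pos (dvd_mul_right 2 _), Nat.mul_div_cancel_left _ two_pos,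
    h, prod_X_add_C_eq_of_prod_X_sub_C_eq h] at hcoeff
  have hQ : (∏ i, (X - C (r i ^ 2))).coeff (n - 1) = -∑ i, r i ^ 2 := by
    have := prod_X_sub_C_coeff_card_pred Finset.univ (fun i => r i ^ 2)
      (by rw [Finset.card_univ]; omega)
    rwa [Finset.card_univ] at this
  rw [hQ] at hcoeff
  have hcoeff_prod :
      ((X ^ n + C c) * (X ^ n + C ((-1) ^ n * c)) : R[X]).coeff (2 * (n - 1)) = 0 := by
    rw [show ((X ^ n + C c) * (X ^ n + C ((-1) ^ n * c)) : R[X]) =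
        X ^ (2 * n) + C (c + (-1) ^ n * c) * X ^ n + C (c * ((-1) ^ n * c)) by
      simp only [map_add, map_mul]; ring]
    simp only [coeff_add, coeff_X_pow, coeff_C_mul_X_pow, coeff_C]
    rw [if_neg (by omega), if_neg (by omega), if_neg (by omega), add_zero, add_zero]
  rw [hcoeff_prod] at hcoeff
  exact neg_eq_zero.mp hcoeff

theorem sum_sub_sq_eq_zero_of_prod_X_sub_C_eq {r : ι → R} {b c : R} (hι : 3 ≤ Fintype.card ι)
    (h : ∏ i, (X - C (r i)) = (X - C b) ^ Fintype.card ι + C c) :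
    ∑ i, (r i - b) ^ 2 = 0 := by
  refine sum_sq_eq_zero_of_prod_X_sub_C_eq (c := c) hι ?_
  have hcomp := congrArg (·.comp (X + C b)) h
  simp only [prod_comp, sub_comp, add_comp, pow_comp, X_comp, C_comp, add_sub_cancel_right]
    at hcomp
  rw [← hcomp]
  exact Finset.prod_congr rfl fun i _ => by rw [map_sub]; ring

end CommRing

theorem eq_of_prod_X_sub_C_eq [CommRing R] [LinearOrder R] [IsStrictOrderedRing R]
    {r : ι → R} {b c : R} (hι : 3 ≤ Fintype.card ι)
    (h : ∏ i, (X - C (r i)) = (X - C b) ^ Fintype.card ι + C c) (i : ι) :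
    r i = b := by
  have hsum := sum_sub_sq_eq_zero_of_prod_X_sub_C_eq hι h
  rw [Finset.sum_eq_zero_iff_of_nonneg fun j _ => sq_nonneg (r j - b)] at hsum
  exact sub_eq_zero.mp (pow_eq_zero_iff two_ne_zero |>.mp (hsum i (Finset.mem_univ i)))

end Polynomial

theorem stmt3_general (n : ℕ) (hn : 3 ≤ n) (α β : ℝ)
    (αv : Fin n → ℝ)
    (hchar : Matrix.charpoly
        (Matrix.diagonal αv + (1 - Matrix.diagonal αv) * Cmat n)
      = (X - C β) ^ n - C (α ^ n)) :
    ∀ i, αv i = β := by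
  rw [Cmat_eq_permMatrix_finRotate, ← diagonal_one, diagonal_sub,
    charpoly_diagonal_add_diagonal_mul_permMatrix (isCycle_finRotate_of_le (by omega))
      (finRotate_apply_ne_self (by omega))]
    at hchar
  refine Polynomial.eq_of_prod_X_sub_C_eq (c := ∏ i, (1 - αv i) - α ^ n)
    (by rwa [Fintype.card_fin]) ?_
  rw [Fintype.card_fin, map_sub]
  linear_combination hchar

theorem stmt3 (n : ℕ) (hn : 3 ≤ n) (α β : ℝ) (hα : α ∈ Set.Ioo (0 : ℝ) 1) (hβ : β = 1 - α)
    (αv : Fin n → ℝ) (hαv : ∀ i, αv i ∈ Set.Icc (0 : ℝ) 1)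
    (hchar : Matrix.charpoly
        (Matrix.diagonal αv + (1 - Matrix.diagonal αv) * Cmat n)
      = (X - C β) ^ n - C (α ^ n)) :
    ∀ i, αv i = β :=
  stmt3_general n hn α β αv hchar
end

section
/- Let n, q be positive integers with 2 ≤ q < n and 2q > n, and let α₁, ..., α_{n+1-q} ∈ (0,1] with ∏ᵢ αᵢ = α. Then the n × n matrix A = (D ⊕ I_{q-1})C_n + ((I_{n+1-q} - D) ⊕ 0_{q-1})C_n^{n-q+1}, where D = diag(α₁,...,α_{n+1-q}), is stochastic and has characteristic polynomial t^n - (1-α)t^{n-q} - α. -/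
open Polynomial Matrix

/-- A matrix is (row) stochastic: nonnegative entries and all row sums equal to 1. -/
def IsStochastic {n : ℕ} (A : Matrix (Fin n) (Fin n) ℝ) : Prop :=
  (∀ i j, 0 ≤ A i j) ∧ ∀ i, ∑ j, A i j = 1

/-!
Row `a` of `A` is `g a • e (a + 1) + (1 - g a) • e (a + m)` with `m = n - q + 1` and indices mod `n`,
which makes `A` stochastic at once. For the characteristic polynomial, the Krylov sequence of
`v = e m` under `A` is `e m, …, e (n - 1), e 0`, followed by `β j • e j + (1 - β j) • e (j + m - 1)`
for `1 ≤ j ≤ m`, where `β j = α₀ ⋯ α_{j-1}`. Up to a reordering of the standard basis its first `n`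
terms are triangular with nonzero diagonal, so `v` is a cyclic vector, and its `n`-th term
`α • v + (1 - α) • v A^{m-1}` shows that `v` is annihilated by `t^n - (1-α) t^{m-1} - α`. A monic
polynomial of degree `n` annihilating a cyclic vector is the characteristic polynomial.
-/

open Fin.NatCast

section General

variable {K : Type*} [Field K] {d : ℕ}

lemma linearIndependent_of_triangular (w : Fin d → Fin d → K) (σ : Fin d → Fin d)
    (hdiag : ∀ k, w k (σ k) ≠ 0) (htri : ∀ k k', k < k' → w k (σ k') = 0) :
    LinearIndependent K w := by
  let M : Matrix (Fin d) (Fin d) K := Matrix.of fun k k' => w k (σ k')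
  have hM : M.det ≠ 0 := by
    rw [det_of_isLowerTriangular M fun k k' h => htri k k' h]
    exact Finset.prod_ne_zero_iff.mpr fun k _ => hdiag k
  exact (linearIndependent_rows_of_det_ne_zero hM).of_comp (LinearMap.funLeft K K σ)

lemma charpoly_eq_of_linearIndependent_krylov (A : Matrix (Fin d) (Fin d) K) (v : Fin d → K)
    (hv : LinearIndependent K fun k : Fin d => v ᵥ* A ^ (k : ℕ)) (p : K[X]) (hp : p.Monic)
    (hdeg : p.natDegree = d) (hpv : v ᵥ* aeval A p = 0) : A.charpoly = p := by
  set r := A.charpoly - p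
  by_contra hne
  have hr0 : r ≠ 0 := sub_ne_zero.mpr hne
  have hdegA : A.charpoly.degree = p.degree := by
    rw [charpoly_degree_eq_dim, Fintype.card_fin, degree_eq_natDegree hp.ne_zero, hdeg]
  have hr : r.natDegree < d := by
    rw [natDegree_lt_iff_degree_lt hr0]
    have := degree_sub_lt_left hdegA A.charpoly_monic.ne_zero
      (by rw [A.charpoly_monic.leadingCoeff, hp.leadingCoeff])
    rwa [charpoly_degree_eq_dim, Fintype.card_fin] at this
  have hrv : ∑ k : Fin d, r.coeff k • v ᵥ* A ^ (k : ℕ) = 0 := by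
    have : v ᵥ* aeval A r = 0 := by
      rw [map_sub, aeval_self_charpoly, zero_sub, vecMul_neg, hpv, neg_zero]
    rw [aeval_eq_sum_range' hr, vecMul_sum, ← Fin.sum_univ_eq_sum_range (fun k => v ᵥ* _)] at this
    simpa only [vecMul_smul] using this
  refine hr0 (Polynomial.ext fun k => ?_)
  by_cases hk : k < d
  · exact Fintype.linearIndependent_iff.mp hv (fun k => r.coeff k) hrv ⟨k, hk⟩
  · exact coeff_eq_zero_of_natDegree_lt (hr.trans_le (not_lt.mp hk))

end General

section ItoMatrix

variable {n : ℕ} [NeZero n]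

-- the standard row vector `e_a`, with `a` read modulo `n`
def singleMod (n : ℕ) [NeZero n] (a : ℕ) : Fin n → ℝ := Pi.single (a : Fin n) 1

lemma singleMod_val (i : Fin n) : singleMod n i = Pi.single i 1 := by
  rw [singleMod, Fin.cast_val_eq_self]

lemma singleMod_self : singleMod n n = singleMod n 0 := by
  rw [singleMod, singleMod, Fin.natCast_self, Nat.cast_zero]

lemma singleMod_vecMul_Cmat (a : ℕ) : singleMod n a ᵥ* Cmat n = singleMod n (a + 1) := by
  ext j
  simp only [singleMod, single_one_vecMul, row, Cmat, Pi.single_apply, Fin.ext_iff, Fin.val_natCast,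
    Nat.mod_add_mod]

lemma singleMod_vecMul_Cmat_pow (a k : ℕ) : singleMod n a ᵥ* Cmat n ^ k = singleMod n (a + k) := by
  induction k with
  | zero => simp
  | succ k ih => rw [pow_succ, ← vecMul_vecMul, ih, singleMod_vecMul_Cmat, add_assoc]

-- `g` is the diagonal of `D ⊕ I_{q-1}` and `m = n - q + 1`
def itoMatrix (g : Fin n → ℝ) (m : ℕ) : Matrix (Fin n) (Fin n) ℝ :=
  diagonal g * Cmat n + (1 - diagonal g) * Cmat n ^ m

lemma singleMod_vecMul_itoMatrix (g : Fin n → ℝ) (m a : ℕ) :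
    singleMod n a ᵥ* itoMatrix g m = g a • singleMod n (a + 1) + (1 - g a) • singleMod n (a + m) := by
  have hdiag : singleMod n a ᵥ* diagonal g = g a • singleMod n a := by
    ext j
    simp [singleMod, Pi.single_apply]
  rw [itoMatrix, vecMul_add, ← vecMul_vecMul, ← vecMul_vecMul, vecMul_sub, vecMul_one, hdiag,
    smul_vecMul, sub_vecMul, smul_vecMul, singleMod_vecMul_Cmat, singleMod_vecMul_Cmat_pow]
  module

lemma isStochastic_itoMatrix (g : Fin n → ℝ) (hg : ∀ i, g i ∈ Set.Icc 0 1) (m : ℕ) :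
    IsStochastic (itoMatrix g m) := by
  have hrow (i j : Fin n) : itoMatrix g m i j =
      g i * singleMod n (i + 1) j + (1 - g i) * singleMod n (i + m) j := by
    have h := singleMod_vecMul_itoMatrix g m i
    rw [singleMod_val, single_one_vecMul, Fin.cast_val_eq_self] at h
    exact congrFun h j
  refine ⟨fun i j => ?_, fun i => ?_⟩
  · obtain ⟨h0, h1⟩ := hg i
    rw [hrow]
    simp only [singleMod, Pi.single_apply]
    split_ifs <;> nlinarith
  · simp only [hrow, Finset.sum_add_distrib, ← Finset.mul_sum, singleMod, Finset.sum_pi_single',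
      Finset.mem_univ, if_true]
    ring

variable (g : Fin n → ℝ) {m : ℕ}

lemma singleMod_vecMul_itoMatrix_of_le (hg1 : ∀ i : Fin n, m ≤ (i : ℕ) → g i = 1) {a : ℕ}
    (hma : m ≤ a) (han : a < n) : singleMod n a ᵥ* itoMatrix g m = singleMod n (a + 1) := by
  rw [singleMod_vecMul_itoMatrix, hg1 _ (by rwa [Fin.val_cast_of_lt han]), sub_self, zero_smul,
    one_smul, add_zero]

lemma krylov_itoMatrix_of_le (hg1 : ∀ i : Fin n, m ≤ (i : ℕ) → g i = 1) {k : ℕ}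
    (hk : m + k ≤ n) : singleMod n m ᵥ* itoMatrix g m ^ k = singleMod n (m + k) := by
  induction k with
  | zero => simp
  | succ k ih =>
    rw [pow_succ, ← vecMul_vecMul, ih (by omega),
      singleMod_vecMul_itoMatrix_of_le g hg1 (by omega) (by omega), add_assoc]

lemma krylov_itoMatrix_of_gt (hm : 2 * m ≤ n + 1) (hg1 : ∀ i : Fin n, m ≤ (i : ℕ) → g i = 1)
    {j : ℕ} (hj : 1 ≤ j) (hjm : j ≤ m) :
    singleMod n m ᵥ* itoMatrix g m ^ (n - m + j) =
      (∏ i ∈ Finset.range j, g i) • singleMod n j +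
        (1 - ∏ i ∈ Finset.range j, g i) • singleMod n (j + m - 1) := by
  induction j, hj using Nat.le_induction with
  | base =>
    rw [pow_succ, ← vecMul_vecMul, krylov_itoMatrix_of_le g hg1 (by omega),
      Nat.add_sub_cancel' (by omega), singleMod_self, singleMod_vecMul_itoMatrix]
    simp
  | succ j hj ih =>
    rw [← add_assoc, pow_succ, ← vecMul_vecMul, ih (by omega), add_vecMul, smul_vecMul,
      smul_vecMul, singleMod_vecMul_itoMatrix,
      singleMod_vecMul_itoMatrix_of_le g hg1 (by omega) (by omega), Finset.prod_range_succ,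
      show j + m - 1 + 1 = j + m by omega, show j + 1 + m - 1 = j + m by omega]
    module

lemma krylov_itoMatrix_linearIndependent (hm : 2 * m ≤ n + 1)
    (hg0 : ∀ i, g i ≠ 0) (hg1 : ∀ i : Fin n, m ≤ (i : ℕ) → g i = 1) :
    LinearIndependent ℝ fun k : Fin n => singleMod n m ᵥ* itoMatrix g m ^ (k : ℕ) := by
  -- `s k` is the position of the leading entry of the `k`-th Krylov vector
  let s : ℕ → ℕ := fun k => if k < n - m then m + k else k - (n - m)
  let σ : Fin n → Fin n := fun k => (s k : Fin n)
  have hs (k : Fin n) : s k < n := by simp only [s]; split_ifs <;> omega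
  have hσ : Function.Injective σ := fun a b hab => by
    have := congrArg Fin.val hab
    simp only [σ, Fin.val_cast_of_lt (hs _)] at this
    simp only [s] at this
    ext; split_ifs at this <;> omega
  have hsingle (a b : Fin n) : singleMod n (s a) (σ b) = if b = a then 1 else 0 := by
    change (Pi.single (σ a) 1 : Fin n → ℝ) (σ b) = _
    simp only [Pi.single_apply, hσ.eq_iff]
  have hlow (k : Fin n) (hk : (k : ℕ) ≤ n - m) :
      singleMod n m ᵥ* itoMatrix g m ^ (k : ℕ) = singleMod n (s k) := by
    rw [krylov_itoMatrix_of_le g hg1 (by omega)]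
    rcases hk.lt_or_eq with hk | hk
    · simp only [s, if_pos hk]
    · simp only [s, hk, lt_irrefl, if_false, Nat.sub_self, Nat.add_sub_cancel' (by omega : m ≤ n),
        singleMod_self]
  have hhigh (k : Fin n) (hk : n - m < (k : ℕ)) : ∃ k' < k, ∃ c : ℝ, c ≠ 0 ∧
      singleMod n m ᵥ* itoMatrix g m ^ (k : ℕ) =
        c • singleMod n (s k) + (1 - c) • singleMod n (s k') := by
    refine ⟨⟨k - (n - m) - 1, by omega⟩, Fin.mk_lt_of_lt_val (by omega),
      ∏ i ∈ Finset.range (k - (n - m)), g i, Finset.prod_ne_zero_iff.mpr fun i _ => hg0 _, ?_⟩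
    have h := krylov_itoMatrix_of_gt g hm hg1 (j := k - (n - m)) (by omega) (by omega)
    rw [Nat.add_sub_cancel' hk.le] at h
    rw [h]
    congr 3 <;> simp only [s] <;> split_ifs <;> omega
  refine linearIndependent_of_triangular _ σ (fun k => ?_) (fun k k' hkk' => ?_) <;>
    rcases le_or_gt (k : ℕ) (n - m) with hk | hk
  · simp [hlow k hk, hsingle]
  · obtain ⟨k'', hk'', c, hc, h⟩ := hhigh k hk
    simpa [h, hsingle, hk''.ne']
  · simp [hlow k hk, hsingle, hkk'.ne']
  · obtain ⟨k'', hk'', c, -, h⟩ := hhigh k hk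
    simp [h, hsingle, hkk'.ne', (hk''.trans hkk').ne']

theorem charpoly_itoMatrix (hm0 : 0 < m) (hm : 2 * m ≤ n + 1)
    (hg0 : ∀ i, g i ≠ 0) (hg1 : ∀ i : Fin n, m ≤ (i : ℕ) → g i = 1) :
    (itoMatrix g m).charpoly =
      X ^ n - C (1 - ∏ i ∈ Finset.range m, g i) * X ^ (m - 1) - C (∏ i ∈ Finset.range m, g i) := by
  set α := ∏ i ∈ Finset.range m, g i
  have hn0 : n ≠ 0 := NeZero.ne n
  have hnm : n ≠ m - 1 := by omega
  have hdeg : (X ^ n - C (1 - α) * X ^ (m - 1) - C α : ℝ[X]).natDegree = n := by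
    compute_degree! <;> first | omega | simp [hn0, hnm]
  refine charpoly_eq_of_linearIndependent_krylov _ (singleMod n m)
    (krylov_itoMatrix_linearIndependent g hm hg0 hg1) _ ?_ hdeg ?_
  · rw [Monic, leadingCoeff, hdeg]
    simp only [coeff_sub, coeff_X_pow_self, coeff_C_mul_X_pow, coeff_C, if_neg hnm, if_neg hn0]
    ring
  · have hn : singleMod n m ᵥ* itoMatrix g m ^ n =
        α • singleMod n m + (1 - α) • singleMod n (m + (m - 1)) := by
      have h := krylov_itoMatrix_of_gt g hm hg1 hm0 le_rfl
      rwa [Nat.sub_add_cancel (by omega), show m + m - 1 = m + (m - 1) by omega] at h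
    rw [map_sub, map_sub, map_mul, aeval_C, aeval_C, map_pow, map_pow, aeval_X,
      Algebra.algebraMap_eq_smul_one, Algebra.algebraMap_eq_smul_one, smul_mul_assoc, one_mul,
      vecMul_sub, vecMul_sub, vecMul_smul, vecMul_smul, vecMul_one, hn,
      krylov_itoMatrix_of_le g hg1 (by omega : m + (m - 1) ≤ n)]
    module

end ItoMatrix

theorem stmt4_general (n q : ℕ) (hqn : q < n) (h2q : n < 2 * q)
    (α : ℝ) (αv : Fin (n + 1 - q) → ℝ) (hαv : ∀ i, αv i ∈ Set.Ioc (0 : ℝ) 1)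
    (hprod : ∏ i, αv i = α) :
    let g : Fin n → ℝ := fun i => if h : (i : ℕ) < n + 1 - q then αv ⟨(i : ℕ), h⟩ else 1
    let A := Matrix.diagonal g * Cmat n + (1 - Matrix.diagonal g) * (Cmat n) ^ (n - q + 1)
    IsStochastic A ∧ Matrix.charpoly A = X ^ n - C (1 - α) * X ^ (n - q) - C α := by
  intro g A
  have : NeZero n := ⟨by omega⟩
  have hg (i : Fin n) : g i ∈ Set.Ioc 0 1 := by
    simp only [g]
    split_ifs
    exacts [hαv _, ⟨one_pos, le_rfl⟩]
  have hg1 (i : Fin n) (hi : n - q + 1 ≤ (i : ℕ)) : g i = 1 := dif_neg (by omega)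
  have hα : ∏ i ∈ Finset.range (n - q + 1), g i = α := by
    rw [← hprod, show n - q + 1 = n + 1 - q by omega, ← Fin.prod_univ_eq_prod_range]
    refine Finset.prod_congr rfl fun i _ => ?_
    simp only [g, Fin.val_cast_of_lt (show (i : ℕ) < n by omega), dif_pos i.isLt]
  refine ⟨isStochastic_itoMatrix g (fun i => Set.Ioc_subset_Icc_self (hg i)) _, ?_⟩
  rw [show A = itoMatrix g (n - q + 1) from rfl,
    charpoly_itoMatrix g (by omega) (by omega) (fun i => (hg i).1.ne') hg1, hα,
    Nat.add_sub_cancel]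

theorem stmt4 (n q : ℕ) (hq : 2 ≤ q) (hqn : q < n) (h2q : n < 2 * q)
    (α : ℝ) (αv : Fin (n + 1 - q) → ℝ) (hαv : ∀ i, αv i ∈ Set.Ioc (0 : ℝ) 1)
    (hprod : ∏ i, αv i = α) :
    let g : Fin n → ℝ := fun i => if h : (i : ℕ) < n + 1 - q then αv ⟨(i : ℕ), h⟩ else 1
    let A := Matrix.diagonal g * Cmat n + (1 - Matrix.diagonal g) * (Cmat n) ^ (n - q + 1)
    IsStochastic A ∧ Matrix.charpoly A = X ^ n - C (1 - α) * X ^ (n - q) - C α :=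
  stmt4_general n q hqn h2q α αv hαv hprod
end

section
/- Let q, n be positive integers with (n+1)/2 ≤ q ≤ n-1 and gcd(q,n) = 1. Let Γ be the digraph on vertices {1,...,n} with edge set E_n ∪ E_q, where E_n = {(j, 1+(j mod n)) : j = 1,...,n} and E_q = {(j, 1+((j-q) mod n)) : j = 1,...,n+1-q}. Then every directed cycle in Γ has length q or length n. -/
/-- There is a directed cycle of length `m` in the digraph with edge relation `E`. -/
def IsCycleIn {V : Type*} (E : V → V → Prop) (m : ℕ) : Prop :=
  ∃ f : ZMod m → V, Function.Injective f ∧ ∀ k, E (f k) (f (k + 1))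

theorem stmt5 (n q : ℕ) (hq2 : n + 1 ≤ 2 * q) (hqn : q ≤ n - 1) (hn : 1 ≤ n)
    (hgcd : Nat.gcd q n = 1)
    (E : ZMod n → ZMod n → Prop)
    (hE : ∀ i j, E i j ↔ (j = i + 1 ∨ (i.val ≤ n - q ∧ j = i + 1 - (q : ZMod n)))) :
    ∀ m, 0 < m → IsCycleIn E m → m = q ∨ m = n := by
  intro m hm ⟨f, hf, hcyc⟩
  have hn3 : 3 ≤ n := by omega
  have hq2' : 2 ≤ q := by omega
  have hqn' : q < n := by omega
  haveI : NeZero n := ⟨by omega⟩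
  haveI : NeZero m := ⟨by omega⟩
  haveI : Fact (1 < n) := ⟨by omega⟩
  -- m ≤ n from injectivity
  have hmn : m ≤ n := by
    have := Fintype.card_le_of_injective f hf
    simpa [ZMod.card] using this
  have val_lt : ∀ x : ZMod n, x.val < n := fun x => ZMod.val_lt x
  have val_add_one : ∀ x : ZMod n, (x + 1).val = (x.val + 1) % n := by
    intro x
    rw [ZMod.val_add, ZMod.val_one]
  -- if val > n - q, the edge must be a +1 edge
  have hplus : ∀ p : ZMod m, n - q < (f p).val → f (p + 1) = f p + 1 := by
    intro p hp
    rcases (hE _ _).1 (hcyc p) with h | ⟨h1, _⟩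
    · exact h
    · omega
  -- jump edge data
  have hT : ∀ k : ZMod m, f (k + 1) ≠ f k + 1 →
      (f k).val ≤ n - q ∧ f (k + 1) = f k + 1 - (q : ZMod n) := by
    intro k hk
    rcases (hE _ _).1 (hcyc k) with h | h
    · exact absurd h hk
    · exact h
  have hcast : ((n + 1 - q : ℕ) : ZMod n) = 1 - (q : ZMod n) := by
    rw [Nat.cast_sub (by omega : q ≤ n + 1)]
    push_cast [ZMod.natCast_self]
    ring
  -- from the top value, next step is 0
  have htop : ∀ p : ZMod m, (f p).val = n - 1 →
      ∃ s : ℕ, 1 ≤ s ∧ f (p + (s : ZMod m)) = 0 ∧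
        ∀ u : ℕ, u < s → n + 1 - q ≤ (f (p + (u : ZMod m))).val := by
    intro p hv
    refine ⟨1, le_rfl, ?_, ?_⟩
    · have hstep : f (p + 1) = f p + 1 := hplus p (by omega)
      have h0 : (f (p + 1)).val = 0 := by
        rw [hstep, val_add_one, hv, show n - 1 + 1 = n from by omega, Nat.mod_self]
      have := (ZMod.val_eq_zero _).1 h0
      simpa using this
    · intro u hu
      have : u = 0 := by omega
      subst this
      simp only [Nat.cast_zero, add_zero]
      omega
  -- from any position with high value, we reach 0 while staying high
  have lemB : ∀ (t : ℕ) (p : ZMod m), n + 1 - q ≤ (f p).val → n - 1 - (f p).val ≤ t →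
      ∃ s : ℕ, 1 ≤ s ∧ f (p + (s : ZMod m)) = 0 ∧
        ∀ u : ℕ, u < s → n + 1 - q ≤ (f (p + (u : ZMod m))).val := by
    intro t
    induction t with
    | zero =>
      intro p hp ht
      have := val_lt (f p)
      exact htop p (by omega)
    | succ t ih =>
      intro p hp ht
      by_cases hv : (f p).val = n - 1
      · exact htop p hv
      · have hstep : f (p + 1) = f p + 1 := hplus p (by omega)
        have hval1 : (f (p + 1)).val = (f p).val + 1 := by
          rw [hstep, val_add_one]
          exact Nat.mod_eq_of_lt (by have := val_lt (f p); omega)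
        obtain ⟨s, hs1, hs0, hsv⟩ := ih (p + 1) (by omega) (by have := val_lt (f p); omega)
        refine ⟨s + 1, by omega, ?_, ?_⟩
        · have hc : p + ((s + 1 : ℕ) : ZMod m) = (p + 1) + (s : ZMod m) := by
            push_cast; ring
          rw [hc]; exact hs0
        · intro u hu
          cases u with
          | zero => simpa using hp
          | succ u' =>
            have hc : p + ((u' + 1 : ℕ) : ZMod m) = (p + 1) + (u' : ZMod m) := by
              push_cast; ring
            rw [hc]; exact hsv u' (by omega)
  -- after a jump edge, we reach 0 while staying high in between
  have clA : ∀ k : ZMod m, f (k + 1) ≠ f k + 1 →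
      ∃ s : ℕ, 1 ≤ s ∧ f (k + (s : ZMod m)) = 0 ∧
        ∀ u : ℕ, 1 ≤ u → u < s → n + 1 - q ≤ (f (k + (u : ZMod m))).val := by
    intro k hk
    obtain ⟨hval, hstep⟩ := hT k hk
    have hw : f (k + 1) = f k + ((n + 1 - q : ℕ) : ZMod n) := by
      rw [hstep, hcast]; ring
    have hwv : (f (k + 1)).val = ((f k).val + (n + 1 - q)) % n := by
      rw [hw, ZMod.val_add, ZMod.val_cast_of_lt (by omega)]
    by_cases hcase : (f k).val + (n + 1 - q) = n
    · have h0 : (f (k + 1)).val = 0 := by rw [hwv, hcase, Nat.mod_self]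
      exact ⟨1, le_rfl, by simpa using (ZMod.val_eq_zero _).1 h0,
        fun u h1 h2 => by omega⟩
    · have hlt : (f k).val + (n + 1 - q) < n := by omega
      have hwv' : (f (k + 1)).val = (f k).val + (n + 1 - q) := by
        rw [hwv, Nat.mod_eq_of_lt hlt]
      obtain ⟨s, hs1, hs0, hsv⟩ := lemB n (k + 1) (by omega) (by omega)
      refine ⟨s + 1, by omega, ?_, ?_⟩
      · have hc : k + ((s + 1 : ℕ) : ZMod m) = (k + 1) + (s : ZMod m) := by
          push_cast; ring
        rw [hc]; exact hs0
      · intro u h1 h2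
        obtain ⟨u', rfl⟩ : ∃ u', u = u' + 1 := ⟨u - 1, by omega⟩
        have hc : k + ((u' + 1 : ℕ) : ZMod m) = (k + 1) + (u' : ZMod m) := by
          push_cast; ring
        rw [hc]; exact hsv u' (by omega)
  -- two jump positions coincide
  have key : ∀ (k₁ k₂ : ZMod m) (s₁ s₂ : ℕ), 1 ≤ s₁ → 1 ≤ s₂ → s₂ ≤ s₁ →
      k₁ + (s₁ : ZMod m) = k₂ + (s₂ : ZMod m) →
      (∀ u : ℕ, 1 ≤ u → u < s₁ → n + 1 - q ≤ (f (k₁ + (u : ZMod m))).val) →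
      (f k₂).val ≤ n - q → k₁ = k₂ := by
    intro k₁ k₂ s₁ s₂ h1 h2 hle heq hval hk2
    by_cases hs : s₁ = s₂
    · subst hs
      exact add_right_cancel heq
    · have hu : k₂ = k₁ + ((s₁ - s₂ : ℕ) : ZMod m) := by
        rw [Nat.cast_sub hle]
        linear_combination -heq
      have hv := hval (s₁ - s₂) (by omega) (by omega)
      rw [← hu] at hv
      exact absurd hv (by omega)
  -- walking along +1 edges
  have walk : ∀ (J : ℕ) (p : ZMod m),
      (∀ j : ℕ, j < J → f (p + (j : ZMod m) + 1) = f (p + (j : ZMod m)) + 1) →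
      f (p + (J : ZMod m)) = f p + (J : ZMod n) := by
    intro J
    induction J with
    | zero => intro p _; simp
    | succ J ih =>
      intro p h
      have h1 : f (p + (J : ZMod m) + 1) = f (p + (J : ZMod m)) + 1 := h J (by omega)
      have h2 := ih p (fun j hj => h j (by omega))
      have hc : p + ((J + 1 : ℕ) : ZMod m) = p + (J : ZMod m) + 1 := by push_cast; ring
      rw [hc, h1, h2]
      push_cast; ring
  by_cases hS : ∀ k : ZMod m, f (k + 1) = f k + 1
  · -- no jump edge : m = n
    right
    have hwm := walk m 0 (fun j _ => hS _)
    rw [ZMod.natCast_self, add_zero] at hwm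
    have hm0 : (m : ZMod n) = 0 := by linear_combination -hwm
    have hdvd : n ∣ m := (ZMod.natCast_eq_zero_iff m n).1 hm0
    exact le_antisymm hmn (Nat.le_of_dvd hm hdvd)
  · push_neg at hS
    obtain ⟨k₀, hk₀⟩ := hS
    have uniq : ∀ k : ZMod m, f (k + 1) ≠ f k + 1 → k = k₀ := by
      intro k hk
      obtain ⟨s₁, hs₁1, hs₁0, hs₁v⟩ := clA k hk
      obtain ⟨s₂, hs₂1, hs₂0, hs₂v⟩ := clA k₀ hk₀
      have heq : k + (s₁ : ZMod m) = k₀ + (s₂ : ZMod m) := hf (hs₁0.trans hs₂0.symm)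
      have hk₀2 : (f k₀).val ≤ n - q := (hT k₀ hk₀).1
      have hk2 : (f k).val ≤ n - q := (hT k hk).1
      rcases le_total s₂ s₁ with h | h
      · exact key k k₀ s₁ s₂ hs₁1 hs₂1 h heq hs₁v hk₀2
      · exact (key k₀ k s₂ s₁ hs₂1 hs₁1 h heq.symm hs₂v hk2).symm
    have hstep₀ := (hT k₀ hk₀).2
    have hwalkall : ∀ j : ℕ, j < m - 1 →
        f (k₀ + 1 + (j : ZMod m) + 1) = f (k₀ + 1 + (j : ZMod m)) + 1 := by
      intro j hj
      by_contra hne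
      have hkk := uniq _ hne
      have h0 : ((j + 1 : ℕ) : ZMod m) = 0 := by
        push_cast
        linear_combination hkk
      have hdvd : m ∣ j + 1 := (ZMod.natCast_eq_zero_iff _ m).1 h0
      have := Nat.le_of_dvd (by omega) hdvd
      omega
    have hw := walk (m - 1) (k₀ + 1) hwalkall
    have hm1 : ((m - 1 : ℕ) : ZMod m) = -1 := by
      have h01 : ((m - 1 : ℕ) : ZMod m) + 1 = 0 := by
        rw [show (1 : ZMod m) = ((1 : ℕ) : ZMod m) from by push_cast; rfl, ← Nat.cast_add,
          show m - 1 + 1 = m from by omega, ZMod.natCast_self]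
      linear_combination h01
    have hc : k₀ + 1 + ((m - 1 : ℕ) : ZMod m) = k₀ := by rw [hm1]; ring
    rw [hc, hstep₀] at hw
    have hm1n : ((m - 1 : ℕ) : ZMod n) = (m : ZMod n) - 1 := by
      rw [Nat.cast_sub (by omega : 1 ≤ m)]
      push_cast; ring
    rw [hm1n] at hw
    have hmq : (m : ZMod n) = (q : ZMod n) := by linear_combination -hw
    have hmod : m % n = q % n := (ZMod.natCast_eq_natCast_iff m q n).1 hmq
    left
    have hq' : q % n = q := Nat.mod_eq_of_lt (by omega)
    rcases eq_or_lt_of_le hmn with h | h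
    · exfalso
      rw [h, Nat.mod_self, hq'] at hmod
      omega
    · rw [Nat.mod_eq_of_lt h, hq'] at hmod
      omega
end

section
/- Let q, n be positive integers with (n+1)/2 ≤ q ≤ n-1 and gcd(q,n) = 1. Suppose Γ is a digraph on vertices {1,...,n} containing the full n-cycle (edges (j, 1+(j mod n)) for all j), such that all directed cycles of Γ have length q or n. Then every edge of Γ not on the n-cycle has the form (j, 1+((j-q) mod n)) for some j. -/
theorem IsCycleIn.of_path {V : Type*} {E : V → V → Prop} {d : ℕ} (f : ℕ → V)
    (hinj : Set.InjOn f (Set.Iic d)) (hstep : ∀ k < d, E (f k) (f (k + 1)))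
    (hclose : E (f d) (f 0)) : IsCycleIn E (d + 1) := by
  refine ⟨fun k => f k.val, ?_, fun k => ?_⟩
  · intro a b hab
    exact ZMod.val_injective _ <| hinj (Nat.lt_succ_iff.mp (ZMod.val_lt a))
      (Nat.lt_succ_iff.mp (ZMod.val_lt b)) hab
  · have hsucc : (k + 1).val = (k.val + 1) % (d + 1) := by
      rw [← ZMod.val_natCast, Nat.cast_succ, ZMod.natCast_zmod_val]
    show E (f k.val) (f (k + 1).val)
    rcases (Nat.lt_succ_iff.mp (ZMod.val_lt k)).lt_or_eq with hk | hk
    · rw [hsucc, Nat.mod_eq_of_lt (by omega)]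
      exact hstep _ hk
    · rw [hsucc, hk, Nat.mod_self]
      exact hclose

theorem isCycleIn_val_sub_add_one {n : ℕ} [NeZero n] {Γ : ZMod n → ZMod n → Prop}
    (hsucc : ∀ i, Γ i (i + 1)) {i j : ZMod n} (hij : Γ i j) :
    IsCycleIn Γ ((i - j).val + 1) := by
  refine IsCycleIn.of_path (fun k => j + k) (fun a ha b hb hab => ?_) (fun k _ => ?_) ?_
  · have hlt : ∀ c ∈ Set.Iic (i - j).val, c < n := fun c hc =>
      lt_of_le_of_lt (Set.mem_Iic.mp hc) (ZMod.val_lt _)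
    have hcast : (a : ZMod n) = b := add_left_cancel hab
    rwa [ZMod.natCast_eq_natCast_iff', Nat.mod_eq_of_lt (hlt a ha),
      Nat.mod_eq_of_lt (hlt b hb)] at hcast
  · simpa only [Nat.cast_succ, add_assoc] using hsucc (j + k)
  · simpa only [ZMod.natCast_zmod_val, add_sub_cancel, Nat.cast_zero, add_zero] using hij

theorem stmt6_general (n q : ℕ) (hn : 1 ≤ n)
    (Γ : ZMod n → ZMod n → Prop) (hcyc : ∀ i, Γ i (i + 1))
    (hall : ∀ m, 0 < m → IsCycleIn Γ m → m = q ∨ m = n) :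
    ∀ i j, Γ i j → j = i + 1 ∨ j = i + 1 - (q : ZMod n) := by
  intro i j hij
  have : NeZero n := ⟨by omega⟩
  have hlen : ∀ m : ℕ, (i - j).val + 1 = m → i - j + 1 = (m : ZMod n) := by
    rintro m rfl
    rw [Nat.cast_succ, ZMod.natCast_zmod_val]
  rcases hall _ (Nat.succ_pos _) (isCycleIn_val_sub_add_one hcyc hij) with hq | hN
  · right
    linear_combination -hlen q hq
  · left
    linear_combination -(hlen n hN) - ZMod.natCast_self n

theorem stmt6 (n q : ℕ) (hq2 : n + 1 ≤ 2 * q) (hqn : q ≤ n - 1) (hn : 1 ≤ n)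
    (hgcd : Nat.gcd q n = 1)
    (Γ : ZMod n → ZMod n → Prop) (hcyc : ∀ i, Γ i (i + 1))
    (hall : ∀ m, 0 < m → IsCycleIn Γ m → m = q ∨ m = n) :
    ∀ i j, Γ i j → j = i + 1 ∨ j = i + 1 - (q : ZMod n) :=
  stmt6_general n q hn Γ hcyc hall
end

section
/- Let q, n be positive integers with (n+1)/2 ≤ q ≤ n-1 and gcd(q,n) = 1, so that 2q > n. Let Γ be a digraph on {1,...,n} containing all edges (j, j+1 mod n) of the n-cycle, all of whose cycles have length q or n. If (i, (i-q+1) mod n) and (j, (j-q+1) mod n) are both edges of Γ with i ≠ j, then the number of vertices on one of the two arcs of the n-cycle between i and j (inclusive of endpoints) is at most n - q + 1. -/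
theorem stmt7 (n q : ℕ) (hq2 : n + 1 ≤ 2 * q) (hqn : q ≤ n - 1) (hn : 1 ≤ n)
    (hgcd : Nat.gcd q n = 1) (hstrict : n < 2 * q)
    (Γ : ZMod n → ZMod n → Prop) (hcyc : ∀ i, Γ i (i + 1))
    (hall : ∀ m, 0 < m → IsCycleIn Γ m → m = q ∨ m = n)
    (i j : ZMod n) (hij : i ≠ j)
    (hi : Γ i (i + 1 - (q : ZMod n))) (hj : Γ j (j + 1 - (q : ZMod n))) :
    (j - i).val + 1 ≤ n - q + 1 ∨ (i - j).val + 1 ≤ n - q + 1 := by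
  by_contra hcon
  push_neg at hcon
  obtain ⟨h1, h2⟩ := hcon
  haveI : NeZero n := ⟨by omega⟩
  have hqn' : q < n := by omega
  set d := (j - i).val with hd
  have hdn : d < n := ZMod.val_lt _
  have hji0 : j - i ≠ 0 := sub_ne_zero.mpr (Ne.symm hij)
  have hd0 : d ≠ 0 := by
    simp only [hd, Ne, ZMod.val_eq_zero]; exact hji0
  have hij_val : (i - j).val = n - d := by
    have hrw : i - j = -(j - i) := by ring
    rw [hrw, ZMod.neg_val, if_neg hji0]
  rw [hij_val] at h2
  have hdlb : n - q + 1 ≤ d := by omega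
  have hdub : d ≤ q - 1 := by omega
  set m := 2 * q - n with hm
  have hm2 : 2 ≤ m := by omega
  have hmq : m < q := by omega
  have hmn : m < n := by omega
  set a := d + q - 1 - n with ha
  set b := q - 1 - d with hb
  have hab : a + b + 2 = m := by omega
  haveI : NeZero m := ⟨by omega⟩
  haveI : Fact (1 < m) := ⟨by omega⟩
  -- cast identities
  have hcd : ((d : ℕ) : ZMod n) = j - i := by
    simp [hd, ZMod.natCast_val, ZMod.cast_id]
  have hcnd : ((n - d : ℕ) : ZMod n) = i - j := by
    rw [← hij_val]; simp [ZMod.natCast_val, ZMod.cast_id]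
  have hA : (a : ZMod n) = (j - i) + (q : ZMod n) - 1 := by
    have h := congrArg (Nat.cast : ℕ → ZMod n) (show a + n + 1 = d + q by omega)
    push_cast at h
    rw [ZMod.natCast_self] at h
    linear_combination h + hcd
  have hB : (b : ZMod n) = (q : ZMod n) - (j - i) - 1 := by
    have h := congrArg (Nat.cast : ℕ → ZMod n) (show b + d + 1 = q by omega)
    push_cast at h
    linear_combination h - hcd
  have hcastinj : ∀ s t : ℕ, s < n → t < n → (s : ZMod n) = (t : ZMod n) → s = t := by
    intro s t hs ht h
    rw [← ZMod.val_cast_of_lt hs, ← ZMod.val_cast_of_lt ht, h]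
  set F : ZMod m → ZMod n := fun k =>
    if k.val ≤ a then i + 1 - (q : ZMod n) + (k.val : ZMod n)
    else j + 1 - (q : ZMod n) + ((k.val - (a + 1) : ℕ) : ZMod n) with hF
  have hFle : ∀ k : ZMod m, k.val ≤ a → F k = i + 1 - (q : ZMod n) + (k.val : ZMod n) := by
    intro k hk; rw [hF]; simp only [if_pos hk]
  have hFgt : ∀ k : ZMod m, ¬ k.val ≤ a →
      F k = j + 1 - (q : ZMod n) + ((k.val - (a + 1) : ℕ) : ZMod n) := by
    intro k hk; rw [hF]; simp only [if_neg hk]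
  have hsucc : ∀ k : ZMod m, k.val + 1 < m → (k + 1).val = k.val + 1 := by
    intro k hk
    rw [ZMod.val_add_of_lt (by rw [ZMod.val_one]; omega), ZMod.val_one]
  have hwrap : ∀ k : ZMod m, k.val + 1 = m → k + 1 = 0 := by
    intro k hk
    have : ((k.val + 1 : ℕ) : ZMod m) = ((m : ℕ) : ZMod m) := by rw [hk]
    rw [ZMod.natCast_self] at this
    push_cast at this
    rwa [ZMod.natCast_val, ZMod.cast_id] at this
  -- key vertex identities
  have hvj : i + 1 - (q : ZMod n) + (a : ZMod n) = j := by rw [hA]; ring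
  have hvi : j + 1 - (q : ZMod n) + (b : ZMod n) = i := by rw [hB]; ring
  have hinj : Function.Injective F := by
    intro k1 k2 hf
    have hs : k1.val < m := ZMod.val_lt _
    have ht : k2.val < m := ZMod.val_lt _
    apply ZMod.val_injective
    by_cases c1 : k1.val ≤ a <;> by_cases c2 : k2.val ≤ a
    · rw [hFle _ c1, hFle _ c2] at hf
      exact hcastinj _ _ (by omega) (by omega) (add_left_cancel hf)
    · -- k1 in first arc, k2 in second
      rw [hFle _ c1, hFgt _ c2] at hf
      exfalso
      set s := k1.val
      set t := k2.val - (a + 1) with htdef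
      have htb : t ≤ b := by omega
      have key : (j - i : ZMod n) = (s : ZMod n) - (t : ZMod n) := by
        linear_combination -hf
      rcases le_or_gt t s with hle | hlt
      · have : ((s - t : ℕ) : ZMod n) = ((d : ℕ) : ZMod n) := by
          rw [hcd, Nat.cast_sub hle, ← key]
        have := hcastinj _ _ (by omega) (by omega) this
        omega
      · have : ((t - s : ℕ) : ZMod n) = ((n - d : ℕ) : ZMod n) := by
          rw [hcnd, Nat.cast_sub hlt.le]
          linear_combination key
        have := hcastinj _ _ (by omega) (by omega) this
        omega
    · rw [hFgt _ c1, hFle _ c2] at hf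
      exfalso
      set s := k2.val
      set t := k1.val - (a + 1) with htdef
      have htb : t ≤ b := by omega
      have key : (j - i : ZMod n) = (s : ZMod n) - (t : ZMod n) := by
        linear_combination hf
      rcases le_or_gt t s with hle | hlt
      · have : ((s - t : ℕ) : ZMod n) = ((d : ℕ) : ZMod n) := by
          rw [hcd, Nat.cast_sub hle, ← key]
        have := hcastinj _ _ (by omega) (by omega) this
        omega
      · have : ((t - s : ℕ) : ZMod n) = ((n - d : ℕ) : ZMod n) := by
          rw [hcnd, Nat.cast_sub hlt.le]
          linear_combination key
        have := hcastinj _ _ (by omega) (by omega) this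
        omega
    · rw [hFgt _ c1, hFgt _ c2] at hf
      have := hcastinj _ _ (by omega) (by omega) (add_left_cancel hf)
      omega
  have hedge : ∀ k : ZMod m, Γ (F k) (F (k + 1)) := by
    intro k
    have hs : k.val < m := ZMod.val_lt _
    rcases eq_or_lt_of_le (show k.val + 1 ≤ m by omega) with hlast | hlt
    · -- wrap around: k.val = m - 1, F k = i, F (k+1) = F 0 = i + 1 - q
      have hk1 : k + 1 = 0 := hwrap k hlast
      have hkv : k.val = a + b + 1 := by omega
      have e1 : F k = i := by
        rw [hFgt _ (by omega), hkv]
        have : a + b + 1 - (a + 1) = b := by omega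
        rw [this, hvi]
      have e2 : F (k + 1) = i + 1 - (q : ZMod n) := by
        rw [hk1, hFle 0 (by simp), ZMod.val_zero]
        push_cast; ring
      rw [e1, e2]; exact hi
    · have hkv : (k + 1).val = k.val + 1 := hsucc k hlt
      rcases lt_trichotomy k.val a with hlt1 | heq | hgt1
      · have e1 : F k = i + 1 - (q : ZMod n) + (k.val : ZMod n) := hFle _ (by omega)
        have e2 : F (k + 1) = i + 1 - (q : ZMod n) + (k.val : ZMod n) + 1 := by
          rw [hFle _ (by omega), hkv]
          push_cast; ring
        rw [e1, e2]; exact hcyc _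
      · -- k.val = a : jump from j
        have e1 : F k = j := by rw [hFle _ (by omega), heq, hvj]
        have e2 : F (k + 1) = j + 1 - (q : ZMod n) := by
          rw [hFgt _ (by omega), hkv, heq]
          have : a + 1 - (a + 1) = 0 := by omega
          rw [this]
          push_cast; ring
        rw [e1, e2]; exact hj
      · have e1 : F k = j + 1 - (q : ZMod n) + ((k.val - (a + 1) : ℕ) : ZMod n) :=
          hFgt _ (by omega)
        have e2 : F (k + 1) = j + 1 - (q : ZMod n) + ((k.val - (a + 1) : ℕ) : ZMod n) + 1 := by
          rw [hFgt _ (by omega), hkv]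
          have : k.val + 1 - (a + 1) = (k.val - (a + 1)) + 1 := by omega
          rw [this]
          push_cast; ring
        rw [e1, e2]; exact hcyc _
  have := hall m (by omega) ⟨F, hinj, hedge⟩
  omega
end

section
/- Let p, q, d, n be positive integers with n = qd, q ≥ 2, d ≥ 2, and gcd(p, q) = 1. In the digraph on {1,...,n} whose edges are (i, 1+((i+pd-1) mod n)) and (i, 1+((i+pd) mod n)) for all i, no edge of the form (i, 1+((i+pd) mod n)) lies on a directed cycle of length q. -/
theorem stmt9 (p q d n : ℕ) (hn : n = q * d) (hq : 2 ≤ q) (hd : 2 ≤ d) (hp : 0 < p)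
    (hgcd : Nat.gcd p q = 1) :
    ¬ ∃ f : ZMod q → ZMod n, Function.Injective f ∧
        (∀ k, f (k + 1) = f k + ((p * d : ℕ) : ZMod n) ∨
              f (k + 1) = f k + ((p * d : ℕ) : ZMod n) + 1) ∧
        (∃ k, f (k + 1) = f k + ((p * d : ℕ) : ZMod n) + 1) := by
  classical
  rintro ⟨f, hinj, hstep, k0, hk0⟩
  have hn0 : 0 < n := by rw [hn]; positivity
  haveI : NeZero n := ⟨hn0.ne'⟩
  haveI : NeZero q := ⟨by omega⟩
  set c : ZMod n := ((p * d : ℕ) : ZMod n) with hc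
  set S : Finset (ZMod q) := Finset.univ.filter (fun k => f (k + 1) = f k + c + 1) with hS
  -- sum of differences is zero
  have hsum1 : ∑ k : ZMod q, (f (k + 1) - f k) = 0 := by
    rw [Finset.sum_sub_distrib]
    rw [Fintype.sum_equiv (Equiv.addRight (1 : ZMod q)) (fun k => f (k + 1)) f (fun k => rfl)]
    simp
  have hstep' : ∀ k : ZMod q, f (k + 1) - f k = c + (if k ∈ S then 1 else 0) := by
    intro k
    by_cases h : k ∈ S
    · have h2 := (Finset.mem_filter.mp h).2
      simp only [h, if_pos]
      rw [h2]; ring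
    · simp only [h, if_neg, not_false_iff]
      rcases hstep k with h1 | h2
      · rw [h1]; ring
      · exact absurd (Finset.mem_filter.mpr ⟨Finset.mem_univ k, h2⟩ : k ∈ S) h
  have hsum2 : ∑ k : ZMod q, (f (k + 1) - f k) = (q : ℕ) • c + (S.card : ZMod n) := by
    simp_rw [hstep']
    rw [Finset.sum_add_distrib, Finset.sum_const, Finset.card_univ, ZMod.card]
    congr 1
    rw [Finset.sum_ite_mem, Finset.univ_inter, Finset.sum_const, nsmul_eq_mul, mul_one]
  have hzero : ((q * (p * d) + S.card : ℕ) : ZMod n) = 0 := by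
    have h0 : (q : ℕ) • c + (S.card : ZMod n) = 0 := by rw [← hsum2, hsum1]
    rw [hc, nsmul_eq_mul] at h0
    push_cast at h0 ⊢
    linear_combination h0
  have hdvd : n ∣ q * (p * d) + S.card := by
    rwa [ZMod.natCast_eq_zero_iff] at hzero
  have hcard_le : S.card ≤ q := by
    calc S.card ≤ Fintype.card (ZMod q) := Finset.card_le_univ S
    _ = q := ZMod.card q
  have hcard_pos : 0 < S.card := by
    apply Finset.card_pos.mpr
    exact ⟨k0, Finset.mem_filter.mpr ⟨Finset.mem_univ _, hk0⟩⟩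
  have hqn : q ∣ n := Dvd.intro d (by rw [hn])
  have hqj : q ∣ S.card :=
    (Nat.dvd_add_right (dvd_mul_right q (p * d))).mp (hqn.trans hdvd)
  have hjq : S.card = q := Nat.le_antisymm hcard_le (Nat.le_of_dvd hcard_pos hqj)
  rw [hjq, hn] at hdvd
  have hdvd' : q * d ∣ q * (p * d + 1) := by
    have : q * (p * d) + q = q * (p * d + 1) := by ring
    rwa [this] at hdvd
  have hd1 : d ∣ p * d + 1 := (mul_dvd_mul_iff_left (by omega : q ≠ 0)).mp hdvd'
  have : d ∣ 1 := (Nat.dvd_add_right (dvd_mul_left d p)).mp hd1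
  have := Nat.le_of_dvd one_pos this
  omega
end

section
/- Let q ≥ 2, d ≥ 2, z ∈ {1,...,q-1}, α ∈ (0,1), β = 1-α. Suppose Γ is a weighted digraph on n = qd vertices whose adjacency matrix is a stochastic matrix with characteristic polynomial f(t) = (t^q - β)^d - α^d t^z. Then Γ has no directed cycles of length less than q, and every directed cycle of Γ has length either qd - z or a multiple kq of q with 1 ≤ k ≤ d. -/
open Polynomial Matrix

namespace Stmt10Aux

open Equiv Function Finset

/-! ### Coefficients of the characteristic polynomial -/

variable {n : ℕ}

lemma coeff_charpoly (A : Matrix (Fin n) (Fin n) ℝ) (c : ℕ) :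
    A.charpoly.coeff c = ∑ σ : Perm (Fin n), ∑ t : Finset (Fin n),
      if (∀ i ∈ t, σ i = i) ∧ t.card = c then
        (Equiv.Perm.sign σ : ℝ) * ∏ i ∈ tᶜ, (- A (σ i) i) else 0 := by
  rw [Matrix.charpoly, Matrix.det_apply, Polynomial.finset_sum_coeff]
  refine Finset.sum_congr rfl fun σ _ => ?_
  have h1 : ∀ i : Fin n, charmatrix A (σ i) i
      = (if σ i = i then (X : ℝ[X]) else 0) + (- C (A (σ i) i)) := by
    intro i
    by_cases h : σ i = i
    · rw [h, if_pos rfl, ← sub_eq_add_neg]; simp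
    · rw [charmatrix_apply_ne _ _ _ h, if_neg h, zero_add]
  have h2 : (∏ i, charmatrix A (σ i) i)
      = ∑ t ∈ (Finset.univ : Finset (Fin n)).powerset,
        (∏ i ∈ t, (if σ i = i then (X : ℝ[X]) else 0)) * ∏ i ∈ Finset.univ \ t, (- C (A (σ i) i)) := by
    simp_rw [h1]; exact Finset.prod_add _ _ _
  rw [h2, Polynomial.coeff_smul, Polynomial.finset_sum_coeff, Finset.powerset_univ,
    Finset.smul_sum]
  refine Finset.sum_congr rfl fun t _ => ?_
  rw [← Finset.compl_eq_univ_sdiff]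
  have hw : (∏ i ∈ tᶜ, (- C (A (σ i) i))) = C (∏ i ∈ tᶜ, (- A (σ i) i)) := by
    rw [map_prod]; simp
  by_cases hfix : ∀ i ∈ t, σ i = i
  · have hx : (∏ i ∈ t, (if σ i = i then (X : ℝ[X]) else 0)) = X ^ t.card := by
      rw [Finset.prod_congr rfl (fun i hi => if_pos (hfix i hi)), Finset.prod_const]
    rw [hx, hw, mul_comm, Polynomial.coeff_C_mul, Polynomial.coeff_X_pow]
    by_cases hc : t.card = c
    · rw [if_pos hc.symm, if_pos ⟨hfix, hc⟩, mul_one, Units.smul_def, zsmul_eq_mul, mul_comm]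
    · rw [if_neg (fun h => hc h.symm), if_neg (fun h => hc h.2), mul_zero, smul_zero]
  · push_neg at hfix
    obtain ⟨i, hi, hne⟩ := hfix
    have hx : (∏ i ∈ t, (if σ i = i then (X : ℝ[X]) else 0)) = 0 :=
      Finset.prod_eq_zero hi (if_neg hne)
    rw [hx, zero_mul, Polynomial.coeff_zero, smul_zero,
      if_neg (fun h => hne (h.1 i hi))]

lemma coeff_charpoly' (A : Matrix (Fin n) (Fin n) ℝ) (m : ℕ) (hm : m ≤ n) :
    A.charpoly.coeff (n - m) = (-1 : ℝ) ^ m * ∑ σ : Perm (Fin n), ∑ U : Finset (Fin n),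
      if (∀ i ∉ U, σ i = i) ∧ U.card = m then
        (Equiv.Perm.sign σ : ℝ) * ∏ i ∈ U, A (σ i) i else 0 := by
  rw [coeff_charpoly, Finset.mul_sum]
  refine Finset.sum_congr rfl fun σ _ => ?_
  rw [Finset.mul_sum]
  refine Fintype.sum_equiv
    ⟨(fun U => Uᶜ : Finset (Fin n) → Finset (Fin n)), (fun U => Uᶜ), compl_compl, compl_compl⟩
    _ _ fun U => ?_
  simp only [Equiv.coe_fn_mk]
  have hcard : Uᶜ.card = n - U.card := by rw [Finset.card_compl U, Fintype.card_fin]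
  have hle : U.card ≤ n := by
    have := Finset.card_le_univ U; rwa [Fintype.card_fin] at this
  by_cases h : (∀ i ∈ U, σ i = i) ∧ U.card = n - m
  · have h1 : ∀ i ∉ Uᶜ, σ i = i := fun i hi => h.1 i (by simpa using hi)
    have h2 : Uᶜ.card = m := by omega
    rw [if_pos h, if_pos ⟨h1, h2⟩]
    rw [show (∏ i ∈ Uᶜ, (- A (σ i) i)) = (-1 : ℝ) ^ Uᶜ.card * ∏ i ∈ Uᶜ, A (σ i) i by
      rw [Finset.prod_congr rfl (fun i _ => (neg_one_mul (A (σ i) i)).symm),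
        Finset.prod_mul_distrib, Finset.prod_const]]
    rw [h2]; ring
  · rw [if_neg h, if_neg, mul_zero]
    rintro ⟨h1, h2⟩
    exact h ⟨fun i hi => h1 i (by simpa using hi), by omega⟩

/-! ### Orbits of permutations -/

variable {V : Type*} [Fintype V] [DecidableEq V]

lemma perm_periodic (σ : Perm V) (x : V) : x ∈ Function.periodicPts ⇑σ := by
  refine ⟨orderOf σ, orderOf_pos σ, ?_⟩
  show (⇑σ)^[orderOf σ] x = x
  rw [Equiv.Perm.iterate_eq_pow σ (orderOf σ), pow_orderOf_eq_one]; rfl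

/-- The orbit of `x` under a permutation `σ`, as a finset. -/
noncomputable def orb (σ : Perm V) (x : V) : Finset V :=
  (Finset.range (Function.minimalPeriod ⇑σ x)).image (fun t => (⇑σ)^[t] x)

omit [Fintype V] in
lemma mem_orb {σ : Perm V} {x y : V} :
    y ∈ orb σ x ↔ ∃ t < Function.minimalPeriod ⇑σ x, (⇑σ)^[t] x = y := by
  simp [orb]

omit [Fintype V] in
lemma card_orb (σ : Perm V) (x : V) : (orb σ x).card = Function.minimalPeriod ⇑σ x := by
  rw [orb, Finset.card_image_of_injOn, Finset.card_range]
  intro a ha b hb hab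
  exact Function.iterate_injOn_Iio_minimalPeriod
    (by simpa using (Finset.mem_range.mp ha)) (by simpa using (Finset.mem_range.mp hb)) hab

lemma mem_orb_self (σ : Perm V) (x : V) : x ∈ orb σ x :=
  mem_orb.mpr ⟨0, Function.minimalPeriod_pos_of_mem_periodicPts (perm_periodic σ x), rfl⟩

lemma iterate_mem_orb (σ : Perm V) (x : V) (t : ℕ) : (⇑σ)^[t] x ∈ orb σ x := by
  have hp := Function.minimalPeriod_pos_of_mem_periodicPts (perm_periodic σ x)
  refine mem_orb.mpr ⟨t % Function.minimalPeriod ⇑σ x, Nat.mod_lt _ hp, ?_⟩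
  exact Function.iterate_mod_minimalPeriod_eq

lemma minimalPeriod_eq_of_mem_orb (σ : Perm V) {x y : V} (hy : y ∈ orb σ x) :
    Function.minimalPeriod ⇑σ y = Function.minimalPeriod ⇑σ x := by
  obtain ⟨t, _, rfl⟩ := mem_orb.mp hy
  exact Function.minimalPeriod_apply_iterate (perm_periodic σ x) t

omit [Fintype V] in
lemma orb_subset {σ : Perm V} {U : Finset V} (hU : ∀ i ∈ U, σ i ∈ U) {x : V} (hx : x ∈ U) :
    orb σ x ⊆ U := by
  intro y hy
  obtain ⟨t, _, rfl⟩ := mem_orb.mp hy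
  clear hy
  induction t with
  | zero => exact hx
  | succ t ih =>
    rw [Function.iterate_succ_apply']
    exact hU _ (ih (by omega))

omit [Fintype V] in
lemma inv_of_fix_outside (σ : Perm V) (U : Finset V) (h : ∀ i ∉ U, σ i = i) :
    ∀ i ∈ U, σ i ∈ U := by
  intro i hi
  by_contra hσ
  have h2 := h (σ i) hσ
  have : σ i = i := σ.injective h2
  rw [this] at hσ
  exact hσ hi

lemma sdiff_orb_inv (σ : Perm V) (U : Finset V) (hU : ∀ i ∈ U, σ i ∈ U) (x : V) :
    ∀ i ∈ U \ orb σ x, σ i ∈ U \ orb σ x := by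
  have horb_inv : ∀ y ∈ orb σ x, σ y ∈ orb σ x := by
    intro y hy
    obtain ⟨t, _, rfl⟩ := mem_orb.mp hy
    rw [← Function.iterate_succ_apply' ⇑σ t x]
    exact iterate_mem_orb σ x (t+1)
  have horb_surj := Finset.surj_on_of_inj_on_of_card_le
    (s := orb σ x) (t := orb σ x) (fun a _ => σ a) (fun a ha => horb_inv a ha)
    (fun a₁ a₂ h₁ h₂ he => σ.injective he) le_rfl
  intro i hi
  rw [Finset.mem_sdiff] at hi ⊢
  refine ⟨hU i hi.1, fun hmem => hi.2 ?_⟩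
  obtain ⟨j, hj, hji⟩ := horb_surj (σ i) hmem
  have hji' : j = i := σ.injective hji.symm
  rwa [hji'] at hj

lemma part_dvd (q : ℕ) (σ : Perm V) : ∀ U : Finset V, (∀ i ∈ U, σ i ∈ U) →
    (∀ i ∈ U, q ∣ Function.minimalPeriod ⇑σ i) → q ∣ U.card := by
  intro U
  induction U using Finset.strongInduction with
  | _ U ih =>
    intro hU hdvd
    rcases U.eq_empty_or_nonempty with rfl | ⟨x, hx⟩
    · simp
    · have hsub : orb σ x ⊆ U := orb_subset hU hx
      have hss : U \ orb σ x ⊂ U := by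
        refine Finset.sdiff_ssubset hsub ⟨x, mem_orb_self σ x⟩
      have h2 := ih _ hss (sdiff_orb_inv σ U hU x)
        (fun i hi => hdvd i (Finset.mem_sdiff.mp hi).1)
      have h1 : q ∣ (orb σ x).card := by rw [card_orb]; exact hdvd x hx
      have hcard : U.card = (orb σ x).card + (U \ orb σ x).card := by
        rw [Finset.card_sdiff_of_subset hsub]
        have := Finset.card_le_card hsub
        omega
      rw [hcard]
      exact Nat.dvd_add h1 h2

/-- An orbit of `σ` inside an invariant set on which `A (σ i) i ≠ 0` yields a directed
cycle of the digraph of nonzero entries, whose length is the minimal period. -/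
lemma cycle_of_orbit (σ : Perm V) (E : V → V → Prop) (U : Finset V)
    (hU : ∀ i ∈ U, σ i ∈ U) (hE : ∀ i ∈ U, E (σ i) i) (x : V) (hx : x ∈ U) :
    IsCycleIn E (Function.minimalPeriod ⇑σ x) := by
  set p := Function.minimalPeriod ⇑σ x with hp
  have hppos : 0 < p := Function.minimalPeriod_pos_of_mem_periodicPts (perm_periodic σ x)
  haveI : NeZero p := ⟨hppos.ne'⟩
  have hmemU : ∀ t : ℕ, (⇑σ)^[t] x ∈ U := by
    intro t; induction t with
    | zero => exact hx
    | succ t ih => rw [Function.iterate_succ_apply']; exact hU _ ih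
  have iter_eq : ∀ a b : ℕ, a % p = b % p → (⇑σ)^[a] x = (⇑σ)^[b] x := by
    intro a b h
    rw [← Function.iterate_mod_minimalPeriod_eq (n := a), ← hp, h, hp,
      Function.iterate_mod_minimalPeriod_eq]
  refine ⟨fun k => (⇑σ)^[(p - k.val) % p] x, ?_, ?_⟩
  · intro k k' hkk'
    have hkv : k.val < p := ZMod.val_lt k
    have hkv' : k'.val < p := ZMod.val_lt k'
    have h1 : (p - k.val) % p < p := Nat.mod_lt _ hppos
    have h2 : (p - k'.val) % p < p := Nat.mod_lt _ hppos
    have := Function.iterate_injOn_Iio_minimalPeriod (f := ⇑σ) (x := x)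
      (Set.mem_Iio.mpr h1) (Set.mem_Iio.mpr h2) hkk'
    have key : ∀ v : ℕ, v < p → (p - v) % p = if v = 0 then 0 else p - v := by
      intro v hv
      by_cases h : v = 0
      · simp [h, Nat.mod_self]
      · rw [if_neg h]; exact Nat.mod_eq_of_lt (by omega)
    rw [key _ hkv, key _ hkv'] at this
    have : k.val = k'.val := by
      by_cases h : k.val = 0 <;> by_cases h' : k'.val = 0 <;>
        simp [h, h'] at this <;> omega
    exact ZMod.val_injective p this
  · intro k
    set v := k.val with hv
    have hkv : v < p := ZMod.val_lt k
    have hw : (k + 1).val = (v + 1) % p := by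
      rw [ZMod.val_add, ZMod.val_one_eq_one_mod]
      conv_rhs => rw [Nat.add_mod]
      rw [Nat.mod_eq_of_lt hkv]
    have hj : (⇑σ)^[(p - (k+1).val) % p] x ∈ U := hmemU _
    have hedge := hE _ hj
    have hσ : σ ((⇑σ)^[(p - (k+1).val) % p] x) = (⇑σ)^[(p - (k+1).val) % p + 1] x :=
      (Function.iterate_succ_apply' ⇑σ _ x).symm
    rw [hσ] at hedge
    have harith : ((p - (k+1).val) % p + 1) % p = ((p - v) % p) % p := by
      rw [hw]
      by_cases hc : v + 1 = p
      · have h0 : (v + 1) % p = 0 := by rw [hc, Nat.mod_self]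
        rw [h0, Nat.sub_zero, Nat.mod_self, Nat.zero_add, Nat.mod_mod_of_dvd _ dvd_rfl]
        have h1 : p - v = 1 := by omega
        rw [h1]
      · have h1 : (v + 1) % p = v + 1 := Nat.mod_eq_of_lt (by omega)
        have h2 : (p - (v+1)) % p = p - (v+1) := Nat.mod_eq_of_lt (by omega)
        have h3 : (p - v) % p % p = (p - v) % p := Nat.mod_mod_of_dvd _ dvd_rfl
        rw [h1, h2, h3]
        have h4 : p - (v+1) + 1 = p - v := by omega
        rw [h4]
    have hiter := iter_eq _ _ harith
    rw [hiter] at hedge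
    exact hedge

/-- If all points of `U` have minimal period `m = #U` under `σ` and `σ` fixes the
complement of `U`, then `σ` is (up to the degenerate case `m = 1`) an `m`-cycle. -/
lemma sign_of_all_period (σ : Perm V) (U : Finset V) (m : ℕ) (hm : 0 < m)
    (hfix : ∀ i ∉ U, σ i = i) (hcard : U.card = m)
    (hper : ∀ i ∈ U, Function.minimalPeriod ⇑σ i = m) :
    (Equiv.Perm.sign σ : ℤ) = (-1) ^ (m - 1) := by
  rcases Nat.lt_or_ge m 2 with hm2 | hm2
  · have hm1 : m = 1 := by omega
    have hσ1 : σ = 1 := by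
      ext i
      by_cases hi : i ∈ U
      · have := hper i hi
        rw [hm1, Function.minimalPeriod_eq_one_iff_isFixedPt] at this
        exact this
      · exact hfix i hi
    rw [hσ1, hm1]
    simp
  · have hUinv := inv_of_fix_outside σ U hfix
    obtain ⟨x, hx⟩ : U.Nonempty := Finset.card_pos.mp (by omega)
    have horb : orb σ x = U := by
      apply Finset.eq_of_subset_of_card_le (orb_subset hUinv hx)
      rw [card_orb, hper x hx, hcard]
    have hmoved : ∀ i ∈ U, σ i ≠ i := by
      intro i hi h
      have := hper i hi
      rw [Function.minimalPeriod_eq_one_iff_isFixedPt.mpr h] at this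
      omega
    have hcyc : σ.IsCycle := by
      refine ⟨x, hmoved x hx, fun y hy => ?_⟩
      have hyU : y ∈ U := by
        by_contra hyU
        exact hy (hfix y hyU)
      rw [← horb] at hyU
      obtain ⟨t, _, rfl⟩ := mem_orb.mp hyU
      exact ⟨(t : ℤ), by rw [zpow_natCast, ← Equiv.Perm.iterate_eq_pow]⟩
    have hsupp : σ.support = U := by
      ext i
      rw [Equiv.Perm.mem_support]
      constructor
      · intro h
        by_contra hiU
        exact h (hfix i hiU)
      · exact hmoved i
    have hsgn := hcyc.sign
    rw [hsupp, hcard] at hsgn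
    rw [hsgn]
    have hm1 : m - 1 + 1 = m := by omega
    rw [← hm1, pow_succ]
    push_cast
    ring

/-- From a directed cycle of length `m` in the digraph of nonzero entries, produce a
nonzero term of the coefficient formula. -/
lemma witness_term {m : ℕ} (hm : 0 < m) (A : Matrix (Fin n) (Fin n) ℝ)
    (f : ZMod m → Fin n) (hfinj : Function.Injective f)
    (hfE : ∀ k, A (f k) (f (k + 1)) ≠ 0) :
    ∃ (σ : Perm (Fin n)) (U : Finset (Fin n)), (∀ i ∉ U, σ i = i) ∧ U.card = m ∧
      ∀ i ∈ U, A (σ i) i ≠ 0 := by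
  haveI : NeZero m := ⟨hm.ne'⟩
  set emb : ZMod m ↪ Fin n := ⟨f, hfinj⟩ with hemb
  set τ : Perm (ZMod m) := Equiv.subRight 1 with hτ
  refine ⟨τ.viaFintypeEmbedding emb, Finset.univ.image f, ?_, ?_, ?_⟩
  · intro i hi
    apply Equiv.Perm.viaFintypeEmbedding_apply_notMem_range
    rintro ⟨k, rfl⟩
    exact hi (Finset.mem_image.mpr ⟨k, Finset.mem_univ k, rfl⟩)
  · rw [Finset.card_image_of_injective _ hfinj, Finset.card_univ, ZMod.card]
  · intro i hi
    obtain ⟨k, _, rfl⟩ := Finset.mem_image.mp hi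
    have h1 : τ.viaFintypeEmbedding emb (emb k) = emb (τ k) :=
      Equiv.Perm.viaFintypeEmbedding_apply_image τ emb k
    have h2 : emb k = f k := rfl
    rw [← h2, h1]
    show A (f (k - 1)) (f k) ≠ 0
    have := hfE (k - 1)
    rwa [sub_add_cancel] at this

/-- Vanishing of coefficients of the Ito polynomial away from multiples of `q` and `z`. -/
lemma ito_coeff {q d z : ℕ} (hq : 0 < q) (β γ : ℝ) (e : ℕ)
    (hne : (((X : ℝ[X]) ^ q - C β) ^ d - C γ * X ^ z).coeff e ≠ 0) :
    q ∣ e ∨ e = z := by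
  by_contra h
  push_neg at h
  obtain ⟨h1, h2⟩ := h
  apply hne
  have hexp : ((X : ℝ[X]) ^ q - C β) ^ d = Polynomial.expand ℝ q ((X - C β) ^ d) := by
    rw [map_pow, map_sub, Polynomial.expand_X, Polynomial.expand_C]
  rw [hexp, Polynomial.coeff_sub, Polynomial.coeff_expand hq, if_neg h1,
    Polynomial.coeff_C_mul, Polynomial.coeff_X_pow, if_neg h2, mul_zero, sub_zero]

end Stmt10Aux

open Stmt10Aux Equiv Function Finset

theorem stmt10 (q d z n : ℕ) (hq : 2 ≤ q) (hd : 2 ≤ d) (hz1 : 1 ≤ z) (hz2 : z ≤ q - 1)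
    (hn : n = q * d) (α : ℝ) (hα : α ∈ Set.Ioo (0 : ℝ) 1)
    (A : Matrix (Fin n) (Fin n) ℝ) (hst : IsStochastic A)
    (hchar : A.charpoly = (X ^ q - C (1 - α)) ^ d - C (α ^ d) * X ^ z) :
    ∀ m, 0 < m → IsCycleIn (fun i j => A i j ≠ 0) m →
      q ≤ m ∧ (m = q * d - z ∨ ∃ k, 1 ≤ k ∧ k ≤ d ∧ m = q * k) := by
  obtain ⟨hA0, _⟩ := hst
  have h2q : q * 2 ≤ q * d := Nat.mul_le_mul_left q hd
  intro m
  induction m using Nat.strong_induction_on with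
  | _ m IH =>
  intro hm hcyc
  haveI : NeZero m := ⟨hm.ne'⟩
  obtain ⟨f, hfinj, hfE⟩ := hcyc
  have hmn : m ≤ n := by
    have := Fintype.card_le_of_injective f hfinj
    rwa [ZMod.card, Fintype.card_fin] at this
  obtain ⟨σ₀, U₀, hσ₀fix, hU₀card, hσ₀A⟩ := witness_term hm A f hfinj hfE
  by_cases hcase : ∀ (σ : Perm (Fin n)) (Uf : Finset (Fin n)), (∀ i ∉ Uf, σ i = i) →
      Uf.card = m → (∀ i ∈ Uf, A (σ i) i ≠ 0) →
      ∀ i ∈ Uf, Function.minimalPeriod ⇑σ i = m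
  · -- Case II: every contributing linear subdigraph on m vertices is a single m-cycle.
    set T : ℝ := ∑ σ : Perm (Fin n), ∑ U : Finset (Fin n),
        (if (∀ i ∉ U, σ i = i) ∧ U.card = m then ∏ i ∈ U, A (σ i) i else 0) with hT
    have hsum : (∑ σ : Perm (Fin n), ∑ U : Finset (Fin n),
        if (∀ i ∉ U, σ i = i) ∧ U.card = m then
          (Equiv.Perm.sign σ : ℝ) * ∏ i ∈ U, A (σ i) i else 0)
        = (-1 : ℝ) ^ (m - 1) * T := by
      rw [hT, Finset.mul_sum]
      refine Finset.sum_congr rfl fun σ _ => ?_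
      rw [Finset.mul_sum]
      refine Finset.sum_congr rfl fun U _ => ?_
      by_cases hc : (∀ i ∉ U, σ i = i) ∧ U.card = m
      · rw [if_pos hc, if_pos hc]
        by_cases hz : (∏ i ∈ U, A (σ i) i) = 0
        · rw [hz]; ring
        · have hAne : ∀ i ∈ U, A (σ i) i ≠ 0 := fun i hi h0 =>
            hz (Finset.prod_eq_zero hi h0)
          have hper := hcase σ U hc.1 hc.2 hAne
          have hsgn := sign_of_all_period σ U m hm hc.1 hc.2 hper
          have hcast : ((Equiv.Perm.sign σ : ℤ) : ℝ) = (-1 : ℝ) ^ (m - 1) := by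
            rw [hsgn]; push_cast; ring
          rw [hcast]
      · rw [if_neg hc, if_neg hc, mul_zero]
    have hterm_nonneg : ∀ (σ : Perm (Fin n)) (U : Finset (Fin n)),
        (0:ℝ) ≤ (if (∀ i ∉ U, σ i = i) ∧ U.card = m then ∏ i ∈ U, A (σ i) i else 0) := by
      intro σ U
      by_cases hc : (∀ i ∉ U, σ i = i) ∧ U.card = m
      · rw [if_pos hc]; exact Finset.prod_nonneg fun i _ => hA0 _ _
      · rw [if_neg hc]
    have hTpos : 0 < T := by
      have hinner_nonneg : ∀ σ : Perm (Fin n), (0:ℝ) ≤ ∑ U : Finset (Fin n),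
          (if (∀ i ∉ U, σ i = i) ∧ U.card = m then ∏ i ∈ U, A (σ i) i else 0) :=
        fun σ => Finset.sum_nonneg fun U _ => hterm_nonneg σ U
      have hterm0 : (0:ℝ) < (if (∀ i ∉ U₀, σ₀ i = i) ∧ U₀.card = m then
          ∏ i ∈ U₀, A (σ₀ i) i else 0) := by
        rw [if_pos ⟨hσ₀fix, hU₀card⟩]
        exact Finset.prod_pos fun i hi => lt_of_le_of_ne (hA0 _ _) (Ne.symm (hσ₀A i hi))
      have h1 : (if (∀ i ∉ U₀, σ₀ i = i) ∧ U₀.card = m then ∏ i ∈ U₀, A (σ₀ i) i else 0)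
          ≤ ∑ U : Finset (Fin n),
            (if (∀ i ∉ U, σ₀ i = i) ∧ U.card = m then ∏ i ∈ U, A (σ₀ i) i else 0) :=
        Finset.single_le_sum (fun U _ => hterm_nonneg σ₀ U) (Finset.mem_univ U₀)
      have h2 : (∑ U : Finset (Fin n),
            (if (∀ i ∉ U, σ₀ i = i) ∧ U.card = m then ∏ i ∈ U, A (σ₀ i) i else 0)) ≤ T := by
        rw [hT]
        exact Finset.single_le_sum (fun σ _ => hinner_nonneg σ) (Finset.mem_univ σ₀)
      linarith
    have hcoeff : A.charpoly.coeff (n - m) ≠ 0 := by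
      rw [coeff_charpoly' A m hmn, hsum]
      have hpow : (-1:ℝ) ^ m * ((-1:ℝ) ^ (m-1) * T) = -T := by
        rw [← mul_assoc, ← pow_add]
        have hmm : m + (m - 1) = 2 * (m - 1) + 1 := by omega
        rw [hmm, pow_succ, pow_mul]
        simp
      rw [hpow]
      exact neg_ne_zero.mpr (ne_of_gt hTpos)
    rw [hchar] at hcoeff
    rcases ito_coeff (by omega) (1 - α) (α ^ d) (n - m) hcoeff with hdvd | hez
    · have hqn : q ∣ n := ⟨d, hn⟩
      have hqm : q ∣ m := by
        have h3 := Nat.dvd_sub hqn hdvd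
        have h4 : n - (n - m) = m := by omega
        rwa [h4] at h3
      obtain ⟨k, hk⟩ := hqm
      have hk1 : 1 ≤ k := by
        rcases Nat.eq_zero_or_pos k with h | h
        · rw [h, Nat.mul_zero] at hk; omega
        · exact h
      have hkd : k ≤ d := by
        have h5 : q * k ≤ q * d := by omega
        exact Nat.le_of_mul_le_mul_left h5 (by omega)
      exact ⟨by rw [hk]; exact Nat.le_mul_of_pos_right q hk1, Or.inr ⟨k, hk1, hkd, hk⟩⟩
    · have hmz : m = q * d - z := by omega
      exact ⟨by omega, Or.inl hmz⟩
  · -- Case I: some contributing linear subdigraph has an orbit of length < m.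
    push_neg at hcase
    obtain ⟨σ, U, hfix, hcard, hAne, i₀, hi₀U, hi₀⟩ := hcase
    have hUinv := inv_of_fix_outside σ U hfix
    have hple : ∀ j ∈ U, Function.minimalPeriod ⇑σ j ≤ m := by
      intro j hj
      have := Finset.card_le_card (orb_subset hUinv hj)
      rwa [card_orb, hcard] at this
    have hplt : ∀ j ∈ U, Function.minimalPeriod ⇑σ j < m := by
      intro j hj
      rcases lt_or_eq_of_le (hple j hj) with h | h
      · exact h
      · exfalso
        have horb : orb σ j = U := by
          apply Finset.eq_of_subset_of_card_le (orb_subset hUinv hj)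
          rw [card_orb, h, hcard]
        have : Function.minimalPeriod ⇑σ i₀ = Function.minimalPeriod ⇑σ j :=
          minimalPeriod_eq_of_mem_orb σ (by rw [horb]; exact hi₀U)
        rw [this, h] at hi₀
        exact hi₀ rfl
    have hppos : ∀ j : Fin n, 0 < Function.minimalPeriod ⇑σ j := fun j =>
      Function.minimalPeriod_pos_of_mem_periodicPts (perm_periodic σ j)
    have hIH : ∀ j ∈ U, q ≤ Function.minimalPeriod ⇑σ j ∧
        (Function.minimalPeriod ⇑σ j = q * d - z ∨
          ∃ k, 1 ≤ k ∧ k ≤ d ∧ Function.minimalPeriod ⇑σ j = q * k) := by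
      intro j hj
      exact IH _ (hplt j hj) (hppos j)
        (cycle_of_orbit σ (fun a b => A a b ≠ 0) U hUinv hAne j hj)
    have hdvd : ∀ j ∈ U, q ∣ Function.minimalPeriod ⇑σ j := by
      intro j hj
      rcases (hIH j hj).2 with hpz | ⟨k, _, _, hk⟩
      · exfalso
        set pj := Function.minimalPeriod ⇑σ j with hpj
        have hWcard : (U \ orb σ j).card = m - pj := by
          rw [Finset.card_sdiff_of_subset (orb_subset hUinv hj), card_orb, hcard]
        have hWpos : 0 < (U \ orb σ j).card := by
          rw [hWcard]
          have := hplt j hj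
          omega
        obtain ⟨j₁, hj₁⟩ := Finset.card_pos.mp hWpos
        have hj₁U : j₁ ∈ U := (Finset.mem_sdiff.mp hj₁).1
        have hWinv := sdiff_orb_inv σ U hUinv j
        have hp₁le : Function.minimalPeriod ⇑σ j₁ ≤ (U \ orb σ j).card := by
          have := Finset.card_le_card (orb_subset hWinv hj₁)
          rwa [card_orb] at this
        have hp₁q : q ≤ Function.minimalPeriod ⇑σ j₁ := (hIH j₁ hj₁U).1
        have hpjlt := hplt j hj
        omega
      · exact ⟨k, hk⟩
    have hqm : q ∣ m := by
      rw [← hcard]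
      exact part_dvd q σ U hUinv hdvd
    obtain ⟨j, hj⟩ : U.Nonempty := Finset.card_pos.mp (hcard ▸ hm)
    have hqle : q ≤ m := le_trans (hIH j hj).1 (le_of_lt (hplt j hj))
    obtain ⟨k, hk⟩ := hqm
    have hk1 : 1 ≤ k := by
      rcases Nat.eq_zero_or_pos k with h | h
      · rw [h, Nat.mul_zero] at hk; omega
      · exact h
    have hkd : k ≤ d := by
      have h5 : q * k ≤ q * d := by omega
      exact Nat.le_of_mul_le_mul_left h5 (by omega)
    exact ⟨hqle, Or.inr ⟨k, hk1, hkd, hk⟩⟩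
end

section
/- Let n = qd + y with q ≥ 2, d ≥ 2, 1 ≤ y ≤ q-1, and α ∈ (0,1). Let Γ be the digraph on {1,...,n} with edge set E_n ∪ {(i_k, 1+((i_k - q) mod n)) : k = 1,...,d}, where E_n is the n-cycle and i_1, ..., i_d are vertices with pairwise circular distance d_n(i_k, i_l) ≥ q for k ≠ l. Then the edges not on the n-cycle lie on d pairwise vertex-disjoint q-cycles of Γ, and Γ has no other cycles besides these d q-cycles and the n-cycle. -/
theorem stmt13 (n q d y : ℕ) (hq : 2 ≤ q) (hd : 2 ≤ d) (hy1 : 1 ≤ y) (hy2 : y ≤ q - 1)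
    (hn : n = q * d + y)
    (iv : Fin d → ZMod n)
    (hdist : ∀ k l, k ≠ l → q ≤ min ((iv k - iv l).val) ((iv l - iv k).val))
    (Γ : ZMod n → ZMod n → Prop)
    (hΓ : ∀ a b, Γ a b ↔ (b = a + 1 ∨ ∃ k, a = iv k ∧ b = iv k + 1 - (q : ZMod n))) :
    (∃ Cyc : Fin d → ZMod q → ZMod n,
      (∀ k, Function.Injective (Cyc k)) ∧
      (∀ k t, Γ (Cyc k t) (Cyc k (t + 1))) ∧
      (∀ k l, k ≠ l → Disjoint (Set.range (Cyc k)) (Set.range (Cyc l))) ∧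
      (∀ k, ∃ t, Cyc k t = iv k ∧ Cyc k (t + 1) = iv k + 1 - (q : ZMod n)) ∧
      (∀ f : ZMod q → ZMod n, Function.Injective f → (∀ s, Γ (f s) (f (s + 1))) →
        ∃ k, Set.range f = Set.range (Cyc k))) ∧
    (∀ m, 0 < m → IsCycleIn Γ m → m = q ∨ m = n) := by
  have h2q : q * 2 ≤ q * d := Nat.mul_le_mul_left q hd
  have hqn : q < n := by omega
  haveI : NeZero n := ⟨by omega⟩
  haveI : NeZero q := ⟨by omega⟩
  -- basic cast helpers
  have hcastinj : ∀ a b : ℕ, a < n → b < n → (a : ZMod n) = (b : ZMod n) → a = b := by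
    intro a b ha hb h
    have := congrArg ZMod.val h
    rwa [ZMod.val_cast_of_lt ha, ZMod.val_cast_of_lt hb] at this
  have hne0 : ∀ a : ℕ, 0 < a → a < n → (a : ZMod n) ≠ 0 := by
    intro a h1 h2 h
    have := hcastinj a 0 h2 (by omega) (by simpa using h)
    omega
  -- key lemma: overlapping short intervals force equal indices
  have hkey : ∀ k l (a b : ℕ), a < q → b < q → iv k + (a : ZMod n) = iv l + (b : ZMod n) →
      k = l := by
    intro k l a b ha hb h
    by_contra hkl
    have hm := hdist k l hkl
    rw [le_min_iff] at hm
    rcases le_total a b with hab | hab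
    · have he : iv k - iv l = ((b - a : ℕ) : ZMod n) := by
        rw [Nat.cast_sub hab]; linear_combination h
      have hv : (iv k - iv l).val = b - a := by
        rw [he, ZMod.val_cast_of_lt (by omega)]
      omega
    · have he : iv l - iv k = ((a - b : ℕ) : ZMod n) := by
        rw [Nat.cast_sub hab]; linear_combination -h
      have hv : (iv l - iv k).val = a - b := by
        rw [he, ZMod.val_cast_of_lt (by omega)]
      omega
  set Cyc : Fin d → ZMod q → ZMod n :=
    fun k t => iv k + 1 - (q : ZMod n) + ((t.val : ℕ) : ZMod n) with hCycdef
  have hCycInj : ∀ k, Function.Injective (Cyc k) := by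
    intro k t1 t2 h
    have h' : ((t1.val : ℕ) : ZMod n) = ((t2.val : ℕ) : ZMod n) := by
      simp only [hCycdef] at h
      linear_combination h
    have hv := hcastinj _ _ (lt_trans (ZMod.val_lt t1) hqn) (lt_trans (ZMod.val_lt t2) hqn) h'
    calc t1 = ((t1.val : ℕ) : ZMod q) := (ZMod.natCast_rightInverse t1).symm
    _ = ((t2.val : ℕ) : ZMod q) := by rw [hv]
    _ = t2 := ZMod.natCast_rightInverse t2
  -- value of Cyc at t with t.val = q - 1 is iv k
  have hCyclast : ∀ k (t : ZMod q), t.val = q - 1 → Cyc k t = iv k := by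
    intro k t ht
    simp only [hCycdef, ht]
    rw [Nat.cast_sub (by omega : 1 ≤ q)]
    push_cast
    ring
  have hsucc : ∀ t : ZMod q, t.val + 1 < q → (t + 1).val = t.val + 1 := by
    intro t ht
    have : t + 1 = ((t.val + 1 : ℕ) : ZMod q) := by
      rw [Nat.cast_add, ZMod.natCast_rightInverse t, Nat.cast_one]
    rw [this, ZMod.val_cast_of_lt ht]
  have hsucc0 : ∀ t : ZMod q, t.val = q - 1 → (t + 1).val = 0 := by
    intro t ht
    have : t + 1 = ((t.val + 1 : ℕ) : ZMod q) := by
      rw [Nat.cast_add, ZMod.natCast_rightInverse t, Nat.cast_one]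
    rw [this, ht]
    have : (q - 1 + 1 : ℕ) = q := by omega
    rw [this, ZMod.natCast_self, ZMod.val_zero]
  have hCycEdge : ∀ k (t : ZMod q), Γ (Cyc k t) (Cyc k (t + 1)) := by
    intro k t
    rw [hΓ]
    by_cases ht : t.val + 1 < q
    · left
      simp only [hCycdef, hsucc t ht]
      push_cast
      ring
    · have ht' : t.val = q - 1 := by have := ZMod.val_lt t; omega
      right
      refine ⟨k, hCyclast k t ht', ?_⟩
      simp only [hCycdef, hsucc0 t ht']
      push_cast
      ring
  -- the master structure lemma
  have master : ∀ (m : ℕ), 0 < m → ∀ f : ZMod m → ZMod n,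
      Function.Injective f → (∀ s, Γ (f s) (f (s + 1))) →
      m = n ∨ (m = q ∧ ∃ k, Set.range f = Set.range (Cyc k)) := by
    intro m hm f hinj hstep
    haveI : NeZero m := ⟨hm.ne'⟩
    have hmn : m ≤ n := by
      have := Fintype.card_le_of_injective f hinj
      rwa [ZMod.card, ZMod.card] at this
    by_cases hjump : ∃ s k, f s = iv k ∧ f (s + 1) = iv k + 1 - (q : ZMod n)
    · right
      obtain ⟨s₀, k, h0, h1⟩ := hjump
      -- the walk after the jump goes along +1 edges
      have steplem : ∀ j : ℕ, 1 ≤ j → j < q → j < m →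
          f (s₀ + (j : ZMod m)) = iv k + 1 - (q : ZMod n) + ((j - 1 : ℕ) : ZMod n) := by
        intro j
        induction j with
        | zero => omega
        | succ j ih =>
          intro _ hjq hjm
          rcases Nat.eq_zero_or_pos j with hj0 | hj1
          · subst hj0
            simpa using h1
          · have prev := ih (by omega) (by omega) (by omega)
            have hstep' := (hΓ _ _).mp (hstep (s₀ + (j : ZMod m)))
            have hshift : s₀ + (j : ZMod m) + 1 = s₀ + ((j + 1 : ℕ) : ZMod m) := by
              push_cast; ring
            rcases hstep' with hpl | ⟨l, hl0, hl1⟩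
            · rw [hshift] at hpl
              rw [hpl, prev, Nat.cast_sub (by omega : 1 ≤ j)]
              have : ((j + 1 - 1 : ℕ) : ZMod n) = (j : ZMod n) := by norm_num
              rw [this]; ring
            · exfalso
              rw [prev, Nat.cast_sub (by omega : 1 ≤ j)] at hl0
              have hkl : l = k := by
                refine hkey l k (q - 1) (j - 1) (by omega) (by omega) ?_
                rw [Nat.cast_sub (by omega : 1 ≤ q), Nat.cast_sub (by omega : 1 ≤ j)]
                linear_combination -hl0
              subst hkl
              have : ((q - j : ℕ) : ZMod n) = 0 := by
                rw [Nat.cast_sub (by omega : j ≤ q)]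
                linear_combination -hl0
              exact hne0 (q - j) (by omega) (by omega) this
      -- m cannot be smaller than q
      have hmq : q ≤ m := by
        by_contra hlt
        push_neg at hlt
        rcases Nat.lt_or_ge m 2 with hm1 | hm2
        · obtain rfl : m = 1 := by omega
          have hs : s₀ + 1 = s₀ := Subsingleton.elim _ _
          rw [hs, h0] at h1
          refine hne0 (q - 1) (by omega) (by omega) ?_
          rw [Nat.cast_sub (by omega : 1 ≤ q)]
          linear_combination h1
        · have prev := steplem (m - 1) (by omega) (by omega) (by omega)
          have hshift : s₀ + ((m - 1 : ℕ) : ZMod m) + 1 = s₀ := by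
            have hc : ((m - 1 : ℕ) : ZMod m) + 1 = ((m - 1 + 1 : ℕ) : ZMod m) := by
              push_cast; ring
            rw [add_assoc, hc, show m - 1 + 1 = m from by omega, ZMod.natCast_self, add_zero]
          have hstep' := (hΓ _ _).mp (hstep (s₀ + ((m - 1 : ℕ) : ZMod m)))
          have hmm : (m - 1 - 1 : ℕ) = m - 2 := by omega
          rw [hmm] at prev
          rcases hstep' with hpl | ⟨l, hl0, hl1⟩
          · rw [hshift, h0, prev] at hpl
            refine hne0 (q - m) (by omega) (by omega) ?_
            rw [Nat.cast_sub (by omega : m ≤ q)]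
            rw [Nat.cast_sub (by omega : 2 ≤ m)] at hpl
            push_cast at hpl ⊢
            linear_combination hpl
          · rw [prev, Nat.cast_sub (by omega : 2 ≤ m)] at hl0
            push_cast at hl0
            have hkl : l = k := by
              refine hkey l k (q - 1) (m - 2) (by omega) (by omega) ?_
              rw [Nat.cast_sub (by omega : 1 ≤ q), Nat.cast_sub (by omega : 2 ≤ m)]
              push_cast
              linear_combination -hl0
            subst hkl
            refine hne0 (q + 1 - m) (by omega) (by omega) ?_
            rw [Nat.cast_sub (by omega : m ≤ q + 1)]
            push_cast
            linear_combination -hl0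
      -- closing the cycle: f (s₀ + q) = f s₀, hence m ∣ q, hence m = q
      have prev := steplem (q - 1) (by omega) (by omega) (by omega)
      have hqq : (q - 1 - 1 : ℕ) = q - 2 := by omega
      rw [hqq] at prev
      have hclose : f (s₀ + ((q : ℕ) : ZMod m)) = f s₀ := by
        have hshift : s₀ + ((q - 1 : ℕ) : ZMod m) + 1 = s₀ + ((q : ℕ) : ZMod m) := by
          have hc : ((q - 1 : ℕ) : ZMod m) + 1 = ((q - 1 + 1 : ℕ) : ZMod m) := by
            push_cast; ring
          rw [add_assoc, hc, show q - 1 + 1 = q from by omega]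
        have hstep' := (hΓ _ _).mp (hstep (s₀ + ((q - 1 : ℕ) : ZMod m)))
        rcases hstep' with hpl | ⟨l, hl0, hl1⟩
        · rw [hshift] at hpl
          rw [hpl, prev, h0, Nat.cast_sub (by omega : 2 ≤ q)]
          push_cast
          ring
        · exfalso
          rw [prev, Nat.cast_sub (by omega : 2 ≤ q)] at hl0
          push_cast at hl0
          have hkl : l = k := by
            refine hkey l k 1 0 (by omega) (by omega) ?_
            push_cast
            linear_combination -hl0
          subst hkl
          refine hne0 1 (by omega) (by omega) ?_
          push_cast
          linear_combination -hl0
      have hq0 : ((q : ℕ) : ZMod m) = 0 := by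
        have := hinj hclose
        rwa [add_eq_left] at this
      have hdvd : m ∣ q := (ZMod.natCast_eq_zero_iff _ _).mp hq0
      have hmeq : m = q := le_antisymm (Nat.le_of_dvd (by omega) hdvd) hmq
      subst hmeq
      refine ⟨rfl, k, ?_⟩
      -- range equality via subset + cardinality
      have hsub : Set.range (Cyc k) ⊆ Set.range f := by
        rintro x ⟨t, rfl⟩
        by_cases ht : t.val + 1 < m
        · refine ⟨s₀ + ((t.val + 1 : ℕ) : ZMod m), ?_⟩
          rw [steplem (t.val + 1) (by omega) ht (by omega)]
          simp only [hCycdef]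
          norm_num
        · have ht' : t.val = m - 1 := by have := ZMod.val_lt t; omega
          exact ⟨s₀, by rw [h0, hCyclast k t ht']⟩
      have hcard : ∀ g : ZMod m → ZMod n, Function.Injective g → (Set.range g).ncard = m := by
        intro g hg
        rw [← Set.image_univ, Set.ncard_image_of_injective _ hg, Set.ncard_univ,
          Nat.card_eq_fintype_card, ZMod.card]
      exact (Set.eq_of_subset_of_ncard_le hsub
        (by rw [hcard f hinj, hcard _ (hCycInj k)]) (Set.toFinite _)).symm
    · left
      push_neg at hjump
      have hplus : ∀ s, f (s + 1) = f s + 1 := by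
        intro s
        rcases (hΓ _ _).mp (hstep s) with h | ⟨l, h1, h2⟩
        · exact h
        · exact absurd h2 (hjump s l h1)
      have hiter : ∀ j : ℕ, f ((j : ℕ) : ZMod m) = f 0 + ((j : ℕ) : ZMod n) := by
        intro j
        induction j with
        | zero => simp
        | succ j ih =>
          have : ((j + 1 : ℕ) : ZMod m) = ((j : ℕ) : ZMod m) + 1 := by push_cast; ring
          rw [this, hplus, ih]
          push_cast
          ring
      have hm0 : ((m : ℕ) : ZMod n) = 0 := by
        have := hiter m
        rw [ZMod.natCast_self] at this
        linear_combination -this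
      have hdvd' : n ∣ m := (ZMod.natCast_eq_zero_iff _ _).mp hm0
      have : n ≤ m := Nat.le_of_dvd hm hdvd'
      omega
  constructor
  · refine ⟨Cyc, hCycInj, hCycEdge, ?_, ?_, ?_⟩
    · -- disjointness
      intro k l hkl
      rw [Set.disjoint_left]
      rintro x ⟨t1, rfl⟩ ⟨t2, ht⟩
      apply hkl
      refine hkey k l t1.val t2.val (ZMod.val_lt t1) (ZMod.val_lt t2) ?_
      simp only [hCycdef] at ht
      linear_combination -ht
    · -- each special edge lies on its cycle
      intro k
      refine ⟨((q - 1 : ℕ) : ZMod q), ?_, ?_⟩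
      · exact hCyclast k _ (ZMod.val_cast_of_lt (by omega))
      · simp only [hCycdef, hsucc0 _ (ZMod.val_cast_of_lt (by omega))]
        push_cast
        ring
    · -- uniqueness of q-cycles
      intro f hf hsteps
      rcases master q (by omega) f hf hsteps with h | ⟨_, k, hk⟩
      · omega
      · exact ⟨k, hk⟩
  · rintro m hm ⟨f, hinj, hstep⟩
    rcases master m hm f hinj hstep with h | ⟨h, _⟩
    · exact Or.inr h
    · exact Or.inl h
end

section
/- Let q ≥ 2, d ≥ 2, z ∈ {1,...,q-1}, n = qd, and α ∈ (0,1). Suppose x₀, ..., x_{d-1} ∈ {0,...,q-1} satisfy ∑ xᵢ = n - z - d. Define a₀ = 1, a_t = 1 + tq + ((x₁+...+x_t) mod q) for t = 1,...,d-1, b₀ = 1+q, b_t = 1+(t+1)q + ((x₁+...+x_t) mod q) for t = 1,...,d-2, and b_{d-1} = 1 + ((q - x₀) mod q). Let A = D(⊕_{k=1}^d C_q) + α∑_{t=0}^{d-1} E_{a_t,b_t}, where D is diagonal with entry 1-α at positions a_t and 1 elsewhere, and E_{i,j} is the matrix unit. Then A is a stochastic matrix with characteristic polynomial (t^q - (1-α))^d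 - α^d t^z. -/
/-!
Number the vertex `k q + p + 1` as `(p, k) : Fin q × Fin d`. Then `A = P + U V`, where `P` is the
block diagonal of the `d` weighted `q`-cycles and `U V = α ∑ₜ E_{aₜ,bₜ}` factors through `Fin d`.
A weighted `q`-cycle `C` whose weights multiply to `γ = 1 - α` satisfies `C ^ q = γ`, hence
`(t - C)⁻¹ = (t ^ q - γ)⁻¹ ∑ⱼ t ^ (q - 1 - j) C ^ j`; its entry from `bₜ` to `aₜ₊₁` is
`t ^ (q - 1 - xₜ₊₁) / (t ^ q - γ)`, since that path of length `xₜ₊₁` avoids the edge of weight `γ`.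
By the matrix determinant lemma `det (t - A) = (t ^ q - γ) ^ d det (1 - V (t - P)⁻¹ U)`, and
`V (t - P)⁻¹ U` is a weighted `d`-cycle with weights `α t ^ (q - 1 - xₜ₊₁) / (t ^ q - γ)`. As
`det (t - W) = t ^ d - ∏ (weights)` for a weighted `d`-cycle `W`, this gives
`(t ^ q - γ) ^ d - α ^ d t ^ z` with `z = ∑ₜ (q - 1 - xₜ)`.
-/

open Polynomial Matrix Finset

open scoped Fin.NatCast Fin.CommRing

theorem Fin.perm_eq_one_or_eq_finRotate {m : ℕ} [NeZero m] (σ : Equiv.Perm (Fin m))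
    (h : ∀ i, σ i = i ∨ σ i = i + 1) : σ = 1 ∨ σ = finRotate m := by
  refine or_iff_not_imp_left.2 fun hσ => ?_
  obtain ⟨i₀, hi₀⟩ : ∃ i, σ i ≠ i := by simpa [Equiv.Perm.ext_iff] using hσ
  have hstep : ∀ k : ℕ, σ (i₀ + k) = i₀ + k + 1 := by
    intro k
    induction k with
    | zero => simpa using (h i₀).resolve_left hi₀
    | succ k ih =>
      rw [Nat.cast_succ, ← add_assoc]
      refine (h _).resolve_left fun hfix => hi₀ ?_
      have h10 : (1 : Fin m) = 0 := by simpa using σ.injective (ih.trans hfix.symm)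
      rw [(h i₀).resolve_left hi₀, h10, add_zero]
  ext j
  rw [finRotate_apply, ← add_sub_cancel i₀ j, ← Fin.cast_val_eq_self (j - i₀), hstep]

namespace Matrix

variable {R : Type*} {m : ℕ} [NeZero m]

def cycleMatrix [Zero R] (w : Fin m → R) : Matrix (Fin m) (Fin m) R :=
  of fun i j => if j = i + 1 then w i else 0

theorem cycleMatrix_apply [Zero R] (w : Fin m → R) (i j : Fin m) :
    cycleMatrix w i j = if j = i + 1 then w i else 0 :=
  rfl

theorem det_scalar_sub_cycleMatrix [CommRing R] (t : R) (w : Fin m → R) :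
    det (scalar (Fin m) t - cycleMatrix w) = t ^ m - ∏ i, w i := by
  obtain rfl | hm : m = 1 ∨ 2 ≤ m := by have := NeZero.pos m; omega
  · simp [det_unique, cycleMatrix]
  obtain ⟨m, rfl⟩ : ∃ k, m = k + 2 := ⟨m - 2, by omega⟩
  set M := scalar (Fin (m + 2)) t - cycleMatrix w
  have hsupp : ∀ σ ∈ univ, σ ∉ ({1, finRotate (m + 2)} : Finset _) →
      (Equiv.Perm.sign σ : R) * ∏ i, Mᵀ (σ i) i = 0 := by
    intro σ _ hσ
    obtain ⟨i, hi, hi'⟩ : ∃ i, σ i ≠ i ∧ σ i ≠ i + 1 := by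
      by_contra! hall
      simp only [mem_insert, mem_singleton, not_or] at hσ
      exact (Fin.perm_eq_one_or_eq_finRotate σ fun i => or_iff_not_imp_left.2 (hall i)).elim
        hσ.1 hσ.2
    refine mul_eq_zero_of_right _ (prod_eq_zero (mem_univ i) ?_)
    simp [M, cycleMatrix, hi', Ne.symm hi]
  have h1rot : (1 : Equiv.Perm (Fin (m + 2))) ≠ finRotate (m + 2) := fun h => by
    simpa using congrArg (· 0) h
  have hdiag : ∏ i, M i i = t ^ (m + 2) := by simp [M, cycleMatrix]
  have hcycle : ∏ i, M i (i + 1) = (-1) ^ (m + 2) * ∏ i, w i := by simp [M, cycleMatrix, prod_neg]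
  have hsign : (-1 : R) ^ (m + 1) * (-1) ^ (m + 2) = -1 := by
    rw [← pow_add, show m + 1 + (m + 2) = 2 * (m + 1) + 1 by ring, pow_succ, pow_mul]
    simp
  rw [← det_transpose, det_apply', ← sum_subset (subset_univ _) hsupp, sum_pair h1rot]
  simp only [transpose_apply, Equiv.Perm.sign_one, sign_finRotate, Equiv.Perm.coe_one, id_eq,
    finRotate_apply, hdiag, hcycle]
  push_cast
  linear_combination (∏ i, w i) * hsign

theorem cycleMatrix_pow_apply [CommSemiring R] (w : Fin m → R) (j : ℕ) (i k : Fin m) :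
    (cycleMatrix w ^ j) i k = if k = i + j then ∏ l ∈ range j, w (i + l) else 0 := by
  induction j generalizing k with
  | zero => simp [one_apply, eq_comm]
  | succ j ih =>
    rw [pow_succ, mul_apply]
    simp_rw [ih]
    rw [sum_eq_single (i + j : Fin m) (fun s _ hs => by simp [hs]) (by simp)]
    simp [cycleMatrix, prod_range_succ, add_assoc]

theorem cycleMatrix_pow_self [CommSemiring R] (w : Fin m → R) :
    cycleMatrix w ^ m = scalar (Fin m) (∏ i, w i) := by
  ext i k
  rw [cycleMatrix_pow_apply, Fin.natCast_self, add_zero,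
    ← Fin.prod_univ_eq_prod_range (fun l => w (i + l))]
  simp only [Fin.cast_val_eq_self]
  rw [Fintype.prod_equiv (Equiv.addLeft i) (fun l => w (i + l)) w fun _ => rfl, scalar_apply,
    diagonal_apply]
  exact if_congr eq_comm rfl rfl

theorem inv_scalar_sub_of_pow_eq {ι K : Type*} [Fintype ι] [DecidableEq ι] [Field K]
    {P : Matrix ι ι K} {n : ℕ} {γ t : K} (hP : P ^ n = scalar ι γ) (ht : t ^ n ≠ γ) :
    (scalar ι t - P)⁻¹ = (t ^ n - γ)⁻¹ • ∑ j ∈ range n, t ^ (n - 1 - j) • P ^ j := by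
  refine inv_eq_right_inv ?_
  have hgeom : ∑ j ∈ range n, t ^ (n - 1 - j) • P ^ j
      = ∑ j ∈ range n, P ^ j * scalar ι t ^ (n - 1 - j) := by
    refine sum_congr rfl fun j _ => ?_
    rw [← map_pow, scalar_apply, smul_eq_mul_diagonal]
  rw [mul_smul_comm, hgeom, ← (scalar_commute t (Commute.all t) P).geom_sum₂_comm,
    (scalar_commute t (Commute.all t) P).mul_geom_sum₂, hP, ← map_pow, ← map_sub, scalar_apply]
  ext i j
  simp [diagonal_apply, one_apply, sub_ne_zero.2 ht]

theorem inv_scalar_sub_cycleMatrix_apply {K : Type*} [Field K] {t : K} (w : Fin m → K)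
    (ht : t ^ m ≠ ∏ i, w i) (i k : Fin m) :
    (scalar (Fin m) t - cycleMatrix w)⁻¹ i k =
      (t ^ m - ∏ i, w i)⁻¹ *
        (t ^ (m - 1 - (k - i : Fin m)) * ∏ l ∈ range (k - i : Fin m), w (i + l)) := by
  rw [inv_scalar_sub_of_pow_eq (cycleMatrix_pow_self w) ht, smul_apply, sum_apply, smul_eq_mul]
  congr 1
  rw [sum_eq_single_of_mem _ (mem_range.2 (k - i).isLt)]
  · simp [cycleMatrix_pow_apply]
  · intro j hj hne
    rw [smul_apply, cycleMatrix_pow_apply, if_neg, smul_zero]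
    rintro rfl
    exact hne (by simp [Fin.val_cast_of_lt (mem_range.1 hj)])

theorem inv_scalar_sub_cycleMatrix_mulSingle_apply {K : Type*} [Field K] {t γ : K} (ht : t ^ m ≠ γ)
    (i k : Fin m) :
    (scalar (Fin m) t - cycleMatrix (Pi.mulSingle k γ))⁻¹ i k =
      (t ^ m - γ)⁻¹ * t ^ (m - 1 - (k - i : Fin m)) := by
  have hprod : ∏ p, (Pi.mulSingle k γ : Fin m → K) p = γ := by simp [prod_pi_mulSingle']
  -- the path `i → i + 1 → ⋯ → k` uses no edge leaving `k`
  have hpath : ∏ l ∈ range (k - i : Fin m), (Pi.mulSingle k γ : Fin m → K) (i + l) = 1 := by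
    refine prod_eq_one fun l hl => ?_
    rw [Pi.mulSingle_apply, if_neg fun h => ?_]
    have hl' := mem_range.1 hl
    have := congrArg Fin.val (eq_sub_of_add_eq' h)
    rw [Fin.val_cast_of_lt (hl'.trans (k - i).isLt)] at this
    omega
  rw [inv_scalar_sub_cycleMatrix_apply _ (hprod.symm ▸ ht), hprod, hpath, mul_one]

theorem inv_blockDiagonal {o n K : Type*} [Fintype o] [DecidableEq o] [Fintype n] [DecidableEq n]
    [CommRing K] (M : o → Matrix n n K) (hM : ∀ k, IsUnit (M k).det) :
    (blockDiagonal M)⁻¹ = blockDiagonal fun k => (M k)⁻¹ := by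
  refine inv_eq_right_inv ?_
  rw [← blockDiagonal_mul, ← blockDiagonal_one]
  exact congrArg blockDiagonal (funext fun k => mul_nonsing_inv _ (hM k))

theorem sum_single_eq_mul {ι κ : Type*} [Fintype κ] [DecidableEq ι] [DecidableEq κ] [Semiring R]
    (f g : κ → ι) (c : R) :
    ∑ k, single (f k) (g k) c =
      (of fun i k => if i = f k then 1 else 0 : Matrix ι κ R) *
        of fun k j => if j = g k then c else 0 := by
  ext i j
  simp only [sum_apply, mul_apply, single_apply, of_apply, ite_mul, one_mul, zero_mul, ite_and]
  exact sum_congr rfl fun k _ => by split_ifs <;> simp_all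

variable {q d : ℕ} [NeZero q] [NeZero d]

/-- In the paper's notation `D (⊕ C_q) + α ∑ₜ E_{aₜ,bₜ}`, with `γ = 1 - α`, `β = α`,
`aₜ = (pa t, t)` and `bₜ = (pb t, t + 1)`. -/
def linkedCycleMatrix [Semiring R] (γ β : R) (pa pb : Fin d → Fin q) :
    Matrix (Fin q × Fin d) (Fin q × Fin d) R :=
  blockDiagonal (fun k => cycleMatrix (Pi.mulSingle (pa k) γ)) +
    ∑ k, single (pa k, k) (pb k, k + 1) β

theorem linkedCycleMatrix_nonneg [Semiring R] [PartialOrder R] [IsOrderedRing R] {γ β : R}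
    (hγ : 0 ≤ γ) (hβ : 0 ≤ β) (pa pb : Fin d → Fin q) (i j : Fin q × Fin d) :
    0 ≤ linkedCycleMatrix γ β pa pb i j := by
  rw [linkedCycleMatrix, add_apply, sum_apply]
  refine add_nonneg ?_ (sum_nonneg fun k _ => ?_)
  · simp only [blockDiagonal_apply, cycleMatrix_apply, Pi.mulSingle_apply]
    split_ifs <;> simp [hγ]
  · simp only [single_apply]
    split_ifs <;> simp [hβ]

theorem sum_linkedCycleMatrix_apply [Semiring R] (γ β : R) (pa pb : Fin d → Fin q)
    (i : Fin q × Fin d) :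
    ∑ j, linkedCycleMatrix γ β pa pb i j = if i.1 = pa i.2 then γ + β else 1 := by
  obtain ⟨p, k⟩ := i
  have hlink :
      ∑ j, (∑ t, single (pa t, t) (pb t, t + 1) β) (p, k) j = if p = pa k then β else 0 := by
    simp only [sum_apply]
    rw [sum_comm]
    simp only [single_apply, ite_and, sum_ite_irrel, sum_ite_eq, mem_univ, if_true, sum_const_zero]
    rw [sum_eq_single k (fun t _ ht => if_neg fun h => ht (congrArg Prod.snd h)) (by simp)]
    simp [eq_comm]
  rw [linkedCycleMatrix]
  simp only [add_apply, sum_add_distrib, hlink]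
  simp only [cycleMatrix_apply, Pi.mulSingle_apply, blockDiagonal_apply, Fintype.sum_prod_type,
    sum_ite_eq, mem_univ, if_true, sum_ite_eq']
  split_ifs <;> simp

theorem scalar_sub_linkedCycleMatrix [CommRing R] (t γ β : R) (pa pb : Fin d → Fin q) :
    scalar _ t - linkedCycleMatrix γ β pa pb =
      blockDiagonal (fun k => scalar (Fin q) t - cycleMatrix (Pi.mulSingle (pa k) γ)) +
        (of fun i k => if i = (pa k, k) then 1 else 0 : Matrix _ (Fin d) R) *
          -(of fun k j => if j = (pb k, k + 1) then β else 0 : Matrix (Fin d) _ R) := by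
  have hscalar : blockDiagonal (fun _ : Fin d => scalar (Fin q) t) = scalar _ t := by
    simp only [scalar_apply, blockDiagonal_diagonal]
  have hblock : (blockDiagonal fun k => scalar (Fin q) t - cycleMatrix (Pi.mulSingle (pa k) γ)) =
      scalar _ t - blockDiagonal fun k => cycleMatrix (Pi.mulSingle (pa k) γ) := by
    rw [← hscalar]
    exact blockDiagonal_sub _ _
  rw [hblock, linkedCycleMatrix, sum_single_eq_mul, Matrix.mul_neg, ← sub_eq_add_neg,
    sub_add_eq_sub_sub]

theorem det_scalar_sub_linkedCycleMatrix {K : Type*} [Field K] {t γ : K} (ht : t ^ q ≠ γ) (β : K)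
    (pa pb : Fin d → Fin q) :
    det (scalar _ t - linkedCycleMatrix γ β pa pb) =
      (t ^ q - γ) ^ d - β ^ d * t ^ (∑ s, (q - 1 - (pa (s + 1) - pb s : Fin q))) := by
  rw [scalar_sub_linkedCycleMatrix]
  set A₀ := blockDiagonal fun k => scalar (Fin q) t - cycleMatrix (Pi.mulSingle (pa k) γ)
  set U : Matrix (Fin q × Fin d) (Fin d) K := of fun i k => if i = (pa k, k) then 1 else 0
  set V : Matrix (Fin d) (Fin q × Fin d) K := of fun k j => if j = (pb k, k + 1) then β else 0
  have hdet (k : Fin d) :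
      det (scalar (Fin q) t - cycleMatrix (Pi.mulSingle (pa k) γ)) = t ^ q - γ := by
    rw [det_scalar_sub_cycleMatrix, prod_pi_mulSingle', if_pos (mem_univ _)]
  have hdetA₀ : det A₀ = (t ^ q - γ) ^ d := by
    rw [det_blockDiagonal]
    simp only [hdet, prod_const, card_univ, Fintype.card_fin]
  have hW : -V * A₀⁻¹ * U =
      -cycleMatrix fun s => β * ((t ^ q - γ)⁻¹ * t ^ (q - 1 - (pa (s + 1) - pb s : Fin q))) := by
    rw [inv_blockDiagonal _ fun k => by rw [hdet]; exact (sub_ne_zero.2 ht).isUnit]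
    ext s s'
    simp only [V, U, Matrix.neg_mul, neg_apply, mul_apply, of_apply, mul_ite, mul_one, mul_zero,
      ite_mul, zero_mul, sum_ite_eq', mem_univ, if_true]
    congr 1
    simp only [blockDiagonal_apply, cycleMatrix_apply]
    by_cases hs : s' = s + 1
    · subst hs
      rw [if_pos rfl, if_pos rfl, inv_scalar_sub_cycleMatrix_mulSingle_apply ht]
    · rw [if_neg (Ne.symm hs), if_neg hs, mul_zero]
  have hunit : IsUnit (det A₀) := by
    rw [hdetA₀]; exact (pow_ne_zero _ (sub_ne_zero.2 ht)).isUnit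
  rw [det_add_mul _ _ hunit, hdetA₀, hW, ← sub_eq_add_neg, ← map_one (scalar (Fin d)),
    det_scalar_sub_cycleMatrix, one_pow, prod_mul_distrib, prod_mul_distrib, prod_const, prod_const,
    prod_pow_eq_pow_sum, card_univ, Fintype.card_fin]
  have hcancel : (t ^ q - γ)⁻¹ ^ d * (t ^ q - γ) ^ d = 1 := by
    rw [inv_pow, inv_mul_cancel₀ (pow_ne_zero _ (sub_ne_zero.2 ht))]
  linear_combination (-(β ^ d * t ^ (∑ s, (q - 1 - (pa (s + 1) - pb s : Fin q))))) * hcancel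

theorem charpoly_linkedCycleMatrix {F : Type*} [Field F] [Infinite F] (γ β : F)
    (pa pb : Fin d → Fin q) :
    (linkedCycleMatrix γ β pa pb).charpoly =
      (X ^ q - C γ) ^ d - C (β ^ d) * X ^ (∑ s, (q - 1 - (pa (s + 1) - pb s : Fin q))) := by
  refine eq_of_infinite_eval_eq _ _ ?_
  have hroots : {t : F | (X ^ q - C γ).IsRoot t}.Finite :=
    finite_setOfPred_isRoot (X_pow_sub_C_ne_zero (NeZero.pos q) γ)
  refine hroots.infinite_compl.mono fun t ht => ?_
  have ht' : t ^ q ≠ γ := by simpa [sub_eq_zero] using ht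
  rw [Set.mem_ofPred_eq, eval_charpoly, det_scalar_sub_linkedCycleMatrix ht']
  simp

end Matrix

theorem isStochastic_reindex {ι : Type*} [Fintype ι] {n : ℕ} (e : ι ≃ Fin n) (M : Matrix ι ι ℝ)
    (hM : ∀ i j, 0 ≤ M i j) (hrow : ∀ i, ∑ j, M i j = 1) : IsStochastic (reindex e e M) :=
  ⟨fun _ _ => hM _ _, fun _ => (Equiv.sum_comp e.symm _).trans (hrow _)⟩

section ItoEncoding

variable {q d : ℕ}

def blockIndex (q d : ℕ) : Fin q × Fin d ≃ Fin (q * d) :=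
  (Equiv.prodComm _ _).trans (finProdFinEquiv.trans (finCongr (mul_comm d q)))

@[simp]
theorem blockIndex_apply_val (x : Fin q × Fin d) : (blockIndex q d x : ℕ) = x.1 + q * x.2 := by
  simp [blockIndex]

theorem blockIndex_mod (x : Fin q × Fin d) : (blockIndex q d x : ℕ) % q = x.1 := by
  rw [blockIndex_apply_val, Nat.add_mul_mod_self_left, Nat.mod_eq_of_lt x.1.isLt]

theorem blockIndex_div [NeZero q] (x : Fin q × Fin d) : (blockIndex q d x : ℕ) / q = x.2 := by
  rw [blockIndex_apply_val, Nat.add_mul_div_left _ _ (NeZero.pos q), Nat.div_eq_of_lt x.1.isLt,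
    zero_add]

def tailPartialSum (x : Fin d → ℕ) (m : ℕ) : ℕ :=
  ∑ i ∈ univ.filter (fun i : Fin d => 1 ≤ (i : ℕ) ∧ (i : ℕ) ≤ m), x i

theorem tailPartialSum_zero (x : Fin d → ℕ) : tailPartialSum x 0 = 0 :=
  sum_eq_zero fun i hi => by
    simp only [nonpos_iff_eq_zero, mem_filter, mem_univ, true_and] at hi
    omega

theorem tailPartialSum_succ (x : Fin d → ℕ) {m : ℕ} (hm : m + 1 < d) :
    tailPartialSum x (m + 1) = tailPartialSum x m + x ⟨m + 1, hm⟩ := by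
  have hnew : (⟨m + 1, hm⟩ : Fin d) ∉ univ.filter (fun i : Fin d => 1 ≤ (i : ℕ) ∧ (i : ℕ) ≤ m) := by
    simp
  unfold tailPartialSum
  refine Eq.trans ?_ ((sum_insert hnew).trans (add_comm _ _))
  congr 1
  ext i
  simp only [mem_filter, mem_univ, true_and, mem_insert, Fin.ext_iff]
  omega

theorem Fin.add_one_eq_zero_of_val_eq_sub_one [NeZero d] {t : Fin d} (ht : (t : ℕ) = d - 1) :
    t + 1 = 0 := by
  ext
  rw [Fin.val_add, Fin.val_one', Nat.add_mod_mod, ht, Nat.sub_add_cancel (NeZero.pos d),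
    Nat.mod_self]
  rfl

variable [NeZero q]

/-- The positions of `aₜ` and `bₜ` inside their cycles `t` and `t + 1`. -/
def itoSource (x : Fin d → ℕ) (t : Fin d) : Fin q :=
  (tailPartialSum x t : Fin q)

theorem eq_blockIndex_itoSource (x : Fin d → ℕ) (t : Fin d) :
    1 + (t : ℕ) * q + tailPartialSum x t % q - 1 = blockIndex q d (itoSource x t, t) := by
  rw [blockIndex_apply_val, itoSource, Fin.val_natCast, add_assoc, Nat.add_sub_cancel_left,
    Nat.mul_comm, Nat.add_comm]

variable [NeZero d]

def itoTarget (x : Fin d → ℕ) (t : Fin d) : Fin q :=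
  if (t : ℕ) = d - 1 then ((q - x 0 : ℕ) : Fin q) else (tailPartialSum x t : Fin q)

theorem eq_blockIndex_itoTarget (x : Fin d → ℕ) (t : Fin d) :
    (if (t : ℕ) = d - 1 then 1 + (q - x ⟨0, NeZero.pos d⟩) % q
      else 1 + ((t : ℕ) + 1) * q + tailPartialSum x t % q) - 1 =
      blockIndex q d (itoTarget x t, t + 1) := by
  rw [blockIndex_apply_val, itoTarget]
  split_ifs with ht
  · rw [Fin.val_natCast, Nat.add_sub_cancel_left, Fin.add_one_eq_zero_of_val_eq_sub_one ht]
    simp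
  · rw [Fin.val_add_one_of_lt' (by omega), Fin.val_natCast, add_assoc, Nat.add_sub_cancel_left,
      Nat.mul_comm, Nat.add_comm]

theorem itoSource_add_one_sub_itoTarget {x : Fin d → ℕ} (hx : ∀ i, x i ≤ q) (s : Fin d) :
    itoSource x (s + 1) - itoTarget x s = (x (s + 1) : Fin q) := by
  rw [itoTarget]
  split_ifs with hs
  · rw [Fin.add_one_eq_zero_of_val_eq_sub_one hs, itoSource, Fin.val_zero, tailPartialSum_zero,
      sub_eq_iff_eq_add, ← Nat.cast_add, Nat.add_sub_cancel' (hx 0), Fin.natCast_self,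
      Nat.cast_zero]
  · have hs1 : ((s + 1 : Fin d) : ℕ) = s + 1 := Fin.val_add_one_of_lt' (by omega)
    rw [itoSource, hs1, tailPartialSum_succ x (by omega), Nat.cast_add, add_sub_cancel_left]
    congr 2
    ext
    exact hs1.symm

theorem sum_tsub_val_itoSource_sub_itoTarget {x : Fin d → ℕ} {z : ℕ} (hx : ∀ i, x i ≤ q - 1)
    (hz : z ≤ q - 1) (hxsum : ∑ i, x i = q * d - z - d) :
    ∑ s, (q - 1 - ((itoSource x (s + 1) - itoTarget x s : Fin q) : ℕ)) = z := by
  have hgap (s : Fin d) : ((itoSource x (s + 1) - itoTarget x s : Fin q) : ℕ) = x (s + 1) := by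
    rw [itoSource_add_one_sub_itoTarget (fun i => (hx i).trans (Nat.sub_le q 1)),
      Fin.val_cast_of_lt (by have := hx (s + 1); have := NeZero.pos q; omega)]
  simp only [hgap]
  have hshift := Equiv.sum_comp (Equiv.addRight (1 : Fin d)) fun s => q - 1 - x s
  simp only [Equiv.coe_addRight] at hshift
  rw [hshift]
  have h1 : ∑ s, (q - 1 - x s) + ∑ s, x s = d * (q - 1) := by
    rw [← sum_add_distrib, sum_congr rfl fun s _ => Nat.sub_add_cancel (hx s), sum_const, card_univ,
      Fintype.card_fin, smul_eq_mul]
  have h2 : d * (q - 1) + d = q * d := by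
    rw [Nat.mul_sub_one, Nat.sub_add_cancel (Nat.le_mul_of_pos_right d (NeZero.pos q)),
      Nat.mul_comm]
  have h3 : q - 1 ≤ d * (q - 1) := Nat.le_mul_of_pos_left _ (NeZero.pos d)
  omega

theorem flat_eq_reindex_linkedCycleMatrix {R : Type*} [Ring R] (α : R) (pa pb : Fin d → Fin q)
    (u v : Fin d → ℕ) (hu : ∀ t, u t = blockIndex q d (pa t, t))
    (hv : ∀ t, v t = blockIndex q d (pb t, t + 1)) (hpos : 0 < q * d) :
    diagonal (fun i : Fin (q * d) => if ∃ t, (i : ℕ) = u t then 1 - α else 1) *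
        (of fun i j : Fin (q * d) => if (j : ℕ) = i / q * q + (i % q + 1) % q then 1 else 0) +
      α • ∑ t, single (⟨u t % (q * d), Nat.mod_lt _ hpos⟩ : Fin (q * d))
        ⟨v t % (q * d), Nat.mod_lt _ hpos⟩ 1 =
    reindex (blockIndex q d) (blockIndex q d) (linkedCycleMatrix (1 - α) α pa pb) := by
  set e := blockIndex q d
  have hu' (t : Fin d) : (⟨u t % (q * d), Nat.mod_lt _ hpos⟩ : Fin (q * d)) = e (pa t, t) :=
    Fin.ext (by simp only [hu, Nat.mod_eq_of_lt (e _).isLt])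
  have hv' (t : Fin d) : (⟨v t % (q * d), Nat.mod_lt _ hpos⟩ : Fin (q * d)) = e (pb t, t + 1) :=
    Fin.ext (by simp only [hv, Nat.mod_eq_of_lt (e _).isLt])
  have hdv (x : Fin q × Fin d) : (∃ t, (e x : ℕ) = u t) ↔ x.1 = pa x.2 := by
    simp only [hu, Fin.val_inj, e.apply_eq_iff_eq]
    exact ⟨by rintro ⟨t, rfl⟩; rfl, fun h => ⟨x.2, Prod.ext h rfl⟩⟩
  have hnext (x y : Fin q × Fin d) :
      (e y : ℕ) = (e x : ℕ) / q * q + ((e x : ℕ) % q + 1) % q ↔ y = (x.1 + 1, x.2) := by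
    rw [blockIndex_div, blockIndex_mod, ← e.apply_eq_iff_eq, ← Fin.val_inj, blockIndex_apply_val,
      blockIndex_apply_val, Fin.val_add, Fin.val_one', Nat.add_mod_mod]
    constructor <;> intro h <;> rw [h] <;> ring
  ext i j
  obtain ⟨x, rfl⟩ := e.surjective i
  obtain ⟨y, rfl⟩ := e.surjective j
  simp only [hu', hv', reindex_apply, submatrix_apply, Equiv.symm_apply_apply, Matrix.add_apply,
    Matrix.smul_apply, Matrix.sum_apply, diagonal_mul, of_apply, hdv, hnext, single_apply,
    e.apply_eq_iff_eq, linkedCycleMatrix, blockDiagonal_apply, cycleMatrix_apply]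
  rw [smul_sum]
  simp only [smul_eq_mul, mul_ite, mul_one, mul_zero]
  congr 1
  obtain ⟨p, k⟩ := x
  obtain ⟨r, l⟩ := y
  simp only [Prod.mk.injEq, Pi.mulSingle_apply]
  rcases eq_or_ne k l with rfl | hkl
  · simp
  · simp [hkl, hkl.symm]

end ItoEncoding

theorem stmt18 (q d z n : ℕ) (hq : 2 ≤ q) (hd : 2 ≤ d) (hz2 : z ≤ q - 1)
    (hn : n = q * d) (α : ℝ) (hα : α ∈ Set.Ioo (0 : ℝ) 1)
    (x : Fin d → ℕ) (hx : ∀ i, x i ≤ q - 1) (hxsum : ∑ i, x i = n - z - d) :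
    -- `a t`, `b t` are the 1-based indices of the extra edges (aₜ, bₜ)
    let a : Fin d → ℕ := fun t =>
      1 + (t : ℕ) * q + (∑ i ∈ Finset.univ.filter (fun i : Fin d => 1 ≤ (i : ℕ) ∧ (i : ℕ) ≤ (t : ℕ)), x i) % q
    let b : Fin d → ℕ := fun t =>
      if (t : ℕ) = d - 1 then 1 + (q - x ⟨0, by omega⟩) % q
      else 1 + ((t : ℕ) + 1) * q + (∑ i ∈ Finset.univ.filter (fun i : Fin d => 1 ≤ (i : ℕ) ∧ (i : ℕ) ≤ (t : ℕ)), x i) % q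
    -- `B` is the block diagonal matrix `⊕ₖ C_q` consisting of `d` copies of the cyclic matrix `C_q`
    let B : Matrix (Fin n) (Fin n) ℝ := fun i j =>
      if (j : ℕ) = ((i : ℕ) / q) * q + (((i : ℕ) % q + 1) % q) then 1 else 0
    let dv : Fin n → ℝ := fun i => if ∃ t : Fin d, (i : ℕ) = a t - 1 then 1 - α else 1
    let A : Matrix (Fin n) (Fin n) ℝ :=
      Matrix.diagonal dv * B +
        α • ∑ t : Fin d,
          Matrix.single
            (⟨(a t - 1) % n, Nat.mod_lt _ (hn ▸ Nat.mul_pos (by omega) (by omega))⟩ : Fin n)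
            (⟨(b t - 1) % n, Nat.mod_lt _ (hn ▸ Nat.mul_pos (by omega) (by omega))⟩ : Fin n) (1 : ℝ)
    IsStochastic A ∧ A.charpoly = (X ^ q - C (1 - α)) ^ d - C (α ^ d) * X ^ z := by
  intro a b B dv A
  subst hn
  have : NeZero q := ⟨by omega⟩
  have : NeZero d := ⟨by omega⟩
  have hA : A = reindex (blockIndex q d) (blockIndex q d)
      (linkedCycleMatrix (1 - α) α (itoSource x) (itoTarget x)) :=
    flat_eq_reindex_linkedCycleMatrix α _ _ (fun t => a t - 1) (fun t => b t - 1)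
      (eq_blockIndex_itoSource x) (eq_blockIndex_itoTarget x)
      (Nat.mul_pos (NeZero.pos q) (NeZero.pos d))
  refine ⟨hA ▸ isStochastic_reindex _ _
    (linkedCycleMatrix_nonneg (sub_nonneg.2 hα.2.le) hα.1.le _ _) fun i => ?_, ?_⟩
  · rw [sum_linkedCycleMatrix_apply, sub_add_cancel, ite_self]
  · rw [hA, charpoly_reindex, charpoly_linkedCycleMatrix,
      sum_tsub_val_itoSource_sub_itoTarget hx hz2 hxsum]
end
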